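/- arXiv:2008.08654 — 11 statements merged into one kernel-verified Lean document; each statement's English description precedes it below -/
import Mathlib

section
/- Let p = 2^b − 1 and 1 ≤ ℓ < b. Let h : [u] → [p] be a k-universal random hash function, and define i(x) = h(x) mod 2^ℓ, a(x) = ⌊h(x)/2^{b−1}⌋, s(x) = 1 − 2·a(x). Then for any j ≤ k distinct keys x₀,...,x_{j−1} ∈ [u] and any real-valued function A of (i(x₀),...,i(x_{j−1}), s(x₁),...,s(x_{j−1})) (i.e., A does not depend on s(x₀)): E[s(x₀)·A] = E[A | i(x₀) = 2^ℓ − 1]/p. -/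
/-!
All quantities are functions of the uniformly distributed vector `Y = (h(x₀), …, h(x_{j-1}))`,
and the integrand sees `y₀ = h(x₀)` only through its sign and its residue mod `2^ℓ`. On
`[0, 2^b)` the points `v` and `v + 2^(b-1)` have opposite signs and the same residue (as
`2^ℓ ∣ 2^(b-1)`), so they cancel; `[p]` misses only `2^b - 1`, of sign `-1` and residue `2^ℓ - 1`.
So summing `s(y₀) · A` over `y₀ ∈ [p]` leaves `A` at residue `2^ℓ - 1`, and averaging over the
other coordinates, which stay uniform given `i(x₀)`, gives `p` times the right-hand side.
-/

open MeasureTheory ProbabilityTheory Finset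

def topBitSign (b v : ℕ) : ℝ := 1 - 2 * ((v / 2 ^ (b - 1) : ℕ) : ℝ)

section TopBitSign

variable {b ℓ : ℕ}

lemma two_pow_sub_one_mod_two_pow (hℓb : ℓ ≤ b) : (2 ^ b - 1) % 2 ^ ℓ = 2 ^ ℓ - 1 := by
  have hle : 2 ^ ℓ ≤ 2 ^ b := Nat.pow_le_pow_right two_pos hℓb
  have hpos : 1 ≤ 2 ^ ℓ := Nat.one_le_two_pow
  have hsplit : 2 ^ b - 1 = (2 ^ ℓ - 1) + 2 ^ ℓ * (2 ^ (b - ℓ) - 1) := by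
    rw [Nat.mul_sub_one, ← pow_add, Nat.add_sub_cancel' hℓb]
    omega
  rw [hsplit, Nat.add_mul_mod_self_left, Nat.mod_eq_of_lt (by omega)]

lemma topBitSign_of_lt {v : ℕ} (hv : v < 2 ^ (b - 1)) : topBitSign b v = 1 := by
  simp [topBitSign, Nat.div_eq_of_lt hv]

lemma topBitSign_two_pow_add {v : ℕ} (hv : v < 2 ^ (b - 1)) :
    topBitSign b (2 ^ (b - 1) + v) = -1 := by
  rw [topBitSign, Nat.add_div_left _ (Nat.two_pow_pos _), Nat.div_eq_of_lt hv]
  norm_num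

theorem sum_range_topBitSign_mul_mod (hℓb : ℓ < b) (g : ℕ → ℝ) :
    ∑ v ∈ range (2 ^ b - 1), topBitSign b v * g (v % 2 ^ ℓ) = g (2 ^ ℓ - 1) := by
  set f : ℕ → ℝ := fun v => topBitSign b v * g (v % 2 ^ ℓ)
  have hM : 2 ^ b = 2 ^ (b - 1) + 2 ^ (b - 1) := by
    rw [← two_mul, ← pow_succ']; congr 1; omega
  obtain ⟨c, hc⟩ : 2 ^ ℓ ∣ 2 ^ (b - 1) := pow_dvd_pow 2 (by omega)
  have hfull : ∑ v ∈ range (2 ^ b), f v = 0 := by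
    rw [hM, sum_range_add, ← sum_add_distrib]
    refine sum_eq_zero fun v hv => ?_
    have hv : v < 2 ^ (b - 1) := mem_range.mp hv
    have hmod : (2 ^ (b - 1) + v) % 2 ^ ℓ = v % 2 ^ ℓ := by rw [hc, Nat.mul_add_mod]
    simp only [f, topBitSign_of_lt hv, topBitSign_two_pow_add hv, hmod]
    ring
  have hlast : f (2 ^ b - 1) = -g (2 ^ ℓ - 1) := by
    have hpos := Nat.two_pow_pos (b - 1)
    have hsplit : 2 ^ b - 1 = 2 ^ (b - 1) + (2 ^ (b - 1) - 1) := by omega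
    simp only [f, two_pow_sub_one_mod_two_pow hℓb.le]
    rw [hsplit, topBitSign_two_pow_add (by omega)]
    ring
  rw [← Nat.sub_add_cancel (Nat.one_le_two_pow (n := b)), sum_range_succ, hlast] at hfull
  linarith

theorem sum_fin_topBitSign_mul_mod {p : ℕ} (hp : p = 2 ^ b - 1) (hℓb : ℓ < b) (g : ℕ → ℝ) :
    ∑ v : Fin p, topBitSign b v * g (v % 2 ^ ℓ) = g (2 ^ ℓ - 1) := by
  subst hp
  rw [Fin.sum_univ_eq_sum_range (fun v => topBitSign b v * g (v % 2 ^ ℓ))]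
  exact sum_range_topBitSign_mul_mod hℓb g

end TopBitSign

section SplitAt

variable {ι α β M : Type*} [Fintype ι] [DecidableEq ι] [Fintype α] [AddCommMonoid M] (a : ι)

lemma sum_pi_eq_sum_sum_of_factor {G : (ι → α) → M} {B : α → ({m // m ≠ a} → α) → M}
    (hG : ∀ y, G y = B (y a) (fun m => y m)) :
    ∑ y, G y = ∑ g : {m // m ≠ a} → α, ∑ v, B v g := by
  rw [← (Equiv.funSplitAt a α).symm.sum_comp, Fintype.sum_prod_type, sum_comm]
  refine sum_congr rfl fun g _ => sum_congr rfl fun v _ => ?_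
  rw [hG]
  exact congrArg (fun z => B z.1 z.2) ((Equiv.funSplitAt a α).apply_symm_apply (v, g))

lemma sum_ite_apply_eq_card_smul [DecidableEq β] (φ : α → β) (c : β) (f : β → M) :
    ∑ v, (if φ v = c then f (φ v) else 0) = #{v | φ v = c} • f c := by
  rw [← sum_filter, ← sum_const]
  exact sum_congr rfl fun v hv => by rw [(mem_filter.mp hv).2]

theorem sum_filter_apply_eq_of_factor [DecidableEq β] (φ : α → β) (c : β)
    {G : (ι → α) → M} {B : β → ({m // m ≠ a} → α) → M}
    (hG : ∀ y, G y = B (φ (y a)) (fun m => y m)) :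
    ∑ y with φ (y a) = c, G y = #{v | φ v = c} • ∑ g : {m // m ≠ a} → α, B c g := by
  rw [sum_filter, sum_pi_eq_sum_sum_of_factor a
    (B := fun v g => if φ v = c then B (φ v) g else 0) (fun y => by rw [hG]), smul_sum]
  exact sum_congr rfl fun g _ => sum_ite_apply_eq_card_smul φ c (B · g)

theorem card_filter_apply_eq [DecidableEq β] (φ : α → β) (c : β) :
    #{y : ι → α | φ (y a) = c} = #{v | φ v = c} * Fintype.card α ^ (Fintype.card ι - 1) := by
  have := sum_filter_apply_eq_of_factor (M := ℕ) a φ c (G := fun _ => 1) (B := fun _ _ => 1)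
    (fun _ => rfl)
  simp only [sum_const, smul_eq_mul, mul_one] at this
  rw [this, card_univ, Fintype.card_fun, Fintype.card_subtype_compl, Fintype.card_subtype_eq]

theorem sum_topBitSign_mul_of_factor {b ℓ p : ℕ} (hp : p = 2 ^ b - 1) (hℓb : ℓ < b)
    {G : (ι → Fin p) → ℝ} {B : ℕ → ({m // m ≠ a} → Fin p) → ℝ}
    (hG : ∀ y, G y = B (y a % 2 ^ ℓ) (fun m => y m)) :
    ∑ y, topBitSign b (y a) * G y = ∑ g : {m // m ≠ a} → Fin p, B (2 ^ ℓ - 1) g := by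
  rw [sum_pi_eq_sum_sum_of_factor a
    (B := fun (v : Fin p) g => topBitSign b v * B (v % 2 ^ ℓ) g) (fun y => by rw [hG])]
  exact sum_congr rfl fun g _ => sum_fin_topBitSign_mul_mod hp hℓb (B · g)

end SplitAt

section UniformPreimage

variable {Ω α : Type*} [MeasurableSpace Ω] {μ : Measure Ω} [IsFiniteMeasure μ]
  [Fintype α] [MeasurableSpace α] [MeasurableSingletonClass α] {Y : Ω → α} {c : ENNReal}

theorem integral_comp_eq_sum_of_measure_preimage_singleton (hY : Measurable Y)
    (hunif : ∀ y, μ (Y ⁻¹' {y}) = c) (G : α → ℝ) :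
    ∫ ω, G (Y ω) ∂μ = c.toReal * ∑ y, G y := by
  rw [← integral_map hY.aemeasurable (Measurable.of_discrete.aestronglyMeasurable),
    integral_fintype .of_finite, mul_sum]
  refine sum_congr rfl fun y _ => ?_
  rw [measureReal_def, Measure.map_apply hY (measurableSet_singleton y), hunif, smul_eq_mul]

theorem setIntegral_preimage_eq_sum_of_measure_preimage_singleton (hY : Measurable Y)
    (hunif : ∀ y, μ (Y ⁻¹' {y}) = c) (T : Finset α) (G : α → ℝ) :
    ∫ ω in Y ⁻¹' T, G (Y ω) ∂μ = c.toReal * ∑ y ∈ T, G y := by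
  rw [← integral_indicator (hY T.measurableSet), ← sum_indicator_subset G (subset_univ T)]
  exact integral_comp_eq_sum_of_measure_preimage_singleton hY hunif ((T : Set α).indicator G)

theorem measureReal_preimage_eq_of_measure_preimage_singleton (hY : Measurable Y)
    (hunif : ∀ y, μ (Y ⁻¹' {y}) = c) (T : Finset α) :
    μ.real (Y ⁻¹' T) = c.toReal * #T := by
  have := setIntegral_preimage_eq_sum_of_measure_preimage_singleton hY hunif T (fun _ => 1)
  simpa using this

end UniformPreimage

lemma card_filter_mod_two_pow_eq_pos {b ℓ p : ℕ} (hp : p = 2 ^ b - 1) (hℓb : ℓ < b) :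
    0 < #{v : Fin p | (v : ℕ) % 2 ^ ℓ = 2 ^ ℓ - 1} := by
  have := Nat.pow_lt_pow_right one_lt_two hℓb
  have := Nat.one_le_two_pow (n := ℓ)
  refine card_pos.mpr ⟨⟨2 ^ ℓ - 1, by omega⟩, ?_⟩
  simp [Nat.mod_eq_of_lt (by omega : 2 ^ ℓ - 1 < 2 ^ ℓ)]

theorem integral_topBitSign_mul_eq_setIntegral_div {Ω ι : Type*} [MeasurableSpace Ω]
    {μ : Measure Ω} [IsFiniteMeasure μ] [Fintype ι] [DecidableEq ι] (a : ι) {b ℓ p : ℕ}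
    (hp : p = 2 ^ b - 1) (hℓb : ℓ < b) {Y : Ω → ι → Fin p} (hY : Measurable Y)
    (hunif : ∀ y, μ (Y ⁻¹' {y}) = (p : ENNReal)⁻¹ ^ Fintype.card ι)
    {G : (ι → Fin p) → ℝ} {B : ℕ → ({m // m ≠ a} → Fin p) → ℝ}
    (hG : ∀ y, G y = B (y a % 2 ^ ℓ) (fun m => y m)) :
    ∫ ω, topBitSign b (Y ω a) * G (Y ω) ∂μ =
      (∫ ω in Y ⁻¹' ({y | (y a : ℕ) % 2 ^ ℓ = 2 ^ ℓ - 1} : Finset (ι → Fin p)), G (Y ω) ∂μ) /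
        μ.real (Y ⁻¹' ({y | (y a : ℕ) % 2 ^ ℓ = 2 ^ ℓ - 1} : Finset (ι → Fin p))) / p := by
  rw [integral_comp_eq_sum_of_measure_preimage_singleton hY hunif
      (fun y => topBitSign b (y a) * G y),
    setIntegral_preimage_eq_sum_of_measure_preimage_singleton hY hunif _ G,
    measureReal_preimage_eq_of_measure_preimage_singleton hY hunif,
    sum_topBitSign_mul_of_factor a hp hℓb hG,
    sum_filter_apply_eq_of_factor a (fun v : Fin p => (v : ℕ) % 2 ^ ℓ) (2 ^ ℓ - 1) hG,
    card_filter_apply_eq a (fun v : Fin p => (v : ℕ) % 2 ^ ℓ), Fintype.card_fin, nsmul_eq_mul]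
  have ht := card_filter_mod_two_pow_eq_pos hp hℓb
  have hp0 : (p : ℝ) ≠ 0 := by
    have := card_le_univ {v : Fin p | (v : ℕ) % 2 ^ ℓ = 2 ^ ℓ - 1}
    rw [Fintype.card_fin] at this
    exact_mod_cast (by omega : p ≠ 0)
  have hcard : 0 < Fintype.card ι := Fintype.card_pos_iff.mpr ⟨a⟩
  have hcancel : (p : ℝ) * (1 / p) ^ Fintype.card ι * p ^ (Fintype.card ι - 1) = 1 := by
    rw [mul_right_comm, mul_pow_sub_one hcard.ne', one_div_pow,
      mul_one_div_cancel (pow_ne_zero _ hp0)]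
  simp only [ENNReal.toReal_pow, ENNReal.toReal_inv, ENNReal.toReal_natCast]
  push_cast
  field_simp
  linear_combination (∑ g, B (2 ^ ℓ - 1) g) * hcancel

theorem stmt1_general
    {Ω : Type*} [MeasureSpace Ω] [IsProbabilityMeasure (ℙ : Measure Ω)]
    (b ℓ u p k : ℕ) (hp : p = 2 ^ b - 1) (hℓb : ℓ < b)
    (h : Ω → Fin u → Fin p)
    (hmeas : ∀ x : Fin u, Measurable fun ω => h ω x)
    (huniv : ∀ j : ℕ, j ≤ k → ∀ x : Fin j → Fin u, Function.Injective x →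
      ∀ y : Fin j → Fin p,
        ℙ {ω | ∀ m : Fin j, h ω (x m) = y m} = (p : ENNReal)⁻¹ ^ j)
    (i : Ω → Fin u → ℕ) (hi : ∀ ω x, i ω x = (h ω x : ℕ) % 2 ^ ℓ)
    (s : Ω → Fin u → ℝ)
    (hs : ∀ ω x, s ω x = 1 - 2 * (((h ω x : ℕ) / 2 ^ (b - 1) : ℕ) : ℝ))
    (j : ℕ) (hj : j ≤ k) (hj0 : 0 < j)
    (x : Fin j → Fin u) (hx : Function.Injective x)
    (A : (Fin j → ℕ) → (Fin j → ℝ) → ℝ)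
    (hA : ∀ (iv : Fin j → ℕ) (sv sv' : Fin j → ℝ),
      (∀ m : Fin j, m ≠ ⟨0, hj0⟩ → sv m = sv' m) → A iv sv = A iv sv') :
    ∫ ω, s ω (x ⟨0, hj0⟩) * A (fun m => i ω (x m)) (fun m => s ω (x m)) =
      ((∫ ω in {ω | i ω (x ⟨0, hj0⟩) = 2 ^ ℓ - 1},
          A (fun m => i ω (x m)) (fun m => s ω (x m))) /
        (ℙ {ω | i ω (x ⟨0, hj0⟩) = 2 ^ ℓ - 1}).toReal) / (p : ℝ) := by
  set a : Fin j := ⟨0, hj0⟩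
  set Y : Ω → Fin j → Fin p := fun ω m => h ω (x m)
  have hY : Measurable Y := measurable_pi_iff.mpr fun m => hmeas (x m)
  have hunif : ∀ y, ℙ (Y ⁻¹' {y}) = (p : ENNReal)⁻¹ ^ Fintype.card (Fin j) := fun y => by
    rw [Fintype.card_fin, ← huniv j hj x hx y]
    congr 1
    ext ω
    simp [Y, funext_iff]
  set G : (Fin j → Fin p) → ℝ := fun y =>
    A (fun m => y m % 2 ^ ℓ) (fun m => topBitSign b (y m))
  set B : ℕ → ({m // m ≠ a} → Fin p) → ℝ := fun r g =>
    A (fun m => if hm : m = a then r else g ⟨m, hm⟩ % 2 ^ ℓ)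
      (fun m => if hm : m = a then 0 else topBitSign b (g ⟨m, hm⟩))
  -- `A` ignores the sign at `a`, so `G` only sees the residue there
  have hG : ∀ y, G y = B (y a % 2 ^ ℓ) (fun m => y m) := fun y => by
    have hiv : (fun m => if hm : m = a then (y a : ℕ) % 2 ^ ℓ else (y m : ℕ) % 2 ^ ℓ) =
        fun m => (y m : ℕ) % 2 ^ ℓ := by
      funext m
      split_ifs with hm <;> simp [hm]
    simp only [G, B, hiv]
    exact hA _ _ _ fun m hm => by simp [hm]
  have hS : {ω | i ω (x a) = 2 ^ ℓ - 1} =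
      Y ⁻¹' ({y | (y a : ℕ) % 2 ^ ℓ = 2 ^ ℓ - 1} : Finset (Fin j → Fin p)) := by
    ext ω
    simp [Y, hi]
  have hAG : ∀ ω, A (fun m => i ω (x m)) (fun m => s ω (x m)) = G (Y ω) := fun ω => by
    simp only [G, Y, hi, hs, topBitSign]
  have hsAG : ∀ ω, s ω (x a) * A (fun m => i ω (x m)) (fun m => s ω (x m)) =
      topBitSign b (Y ω a) * G (Y ω) := fun ω => by
    rw [hAG, hs, topBitSign]
  simp only [hsAG]
  simp only [hAG, hS, ← measureReal_def]
  exact integral_topBitSign_mul_eq_setIntegral_div a hp hℓb hY hunif hG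

/-- Lemma 1 (sign near cancellation for Mersenne primes): with `p = 2^b - 1`,
`1 ≤ ℓ < b`, `h : [u] → [p]` a `k`-universal random hash function,
`i(x) = h(x) mod 2^ℓ`, `s(x) = 1 - 2⌊h(x)/2^(b-1)⌋`, for any `j ≤ k` distinct keys
`x₀, ..., x_{j-1}` and any real-valued function `A` of
`(i(x₀), ..., i(x_{j-1}), s(x₁), ..., s(x_{j-1}))` (not depending on `s(x₀)`):
`E[s(x₀)·A] = E[A | i(x₀) = 2^ℓ - 1] / p`. -/
theorem stmt1
    {Ω : Type*} [MeasureSpace Ω] [IsProbabilityMeasure (ℙ : Measure Ω)]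
    (b ℓ u p k : ℕ) (hp : p = 2 ^ b - 1) (hℓ1 : 1 ≤ ℓ) (hℓb : ℓ < b)
    (h : Ω → Fin u → Fin p)
    (hmeas : ∀ x : Fin u, Measurable fun ω => h ω x)
    (huniv : ∀ j : ℕ, j ≤ k → ∀ x : Fin j → Fin u, Function.Injective x →
      ∀ y : Fin j → Fin p,
        ℙ {ω | ∀ m : Fin j, h ω (x m) = y m} = (p : ENNReal)⁻¹ ^ j)
    (i : Ω → Fin u → ℕ) (hi : ∀ ω x, i ω x = (h ω x : ℕ) % 2 ^ ℓ)
    (s : Ω → Fin u → ℝ)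
    (hs : ∀ ω x, s ω x = 1 - 2 * (((h ω x : ℕ) / 2 ^ (b - 1) : ℕ) : ℝ))
    (j : ℕ) (hj : j ≤ k) (hj0 : 0 < j)
    (x : Fin j → Fin u) (hx : Function.Injective x)
    (A : (Fin j → ℕ) → (Fin j → ℝ) → ℝ)
    (hA : ∀ (iv : Fin j → ℕ) (sv sv' : Fin j → ℝ),
      (∀ m : Fin j, m ≠ ⟨0, hj0⟩ → sv m = sv' m) → A iv sv = A iv sv') :
    ∫ ω, s ω (x ⟨0, hj0⟩) * A (fun m => i ω (x m)) (fun m => s ω (x m)) =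
      ((∫ ω in {ω | i ω (x ⟨0, hj0⟩) = 2 ^ ℓ - 1},
          A (fun m => i ω (x m)) (fun m => s ω (x m))) /
        (ℙ {ω | i ω (x ⟨0, hj0⟩) = 2 ^ ℓ - 1}).toReal) / (p : ℝ) :=
  stmt1_general b ℓ u p k hp hℓb h hmeas huniv i hi s hs j hj hj0 x hx A hA
end

section
/- Let r and b be positive integers. The map v ↦ ⌊v·r/2^b⌋ from [2^b] to [r] (well-defined when r ≤ 2^b) is most uniform: for every i ∈ [r], the number of v ∈ [2^b] with ⌊v·r/2^b⌋ = i is either ⌊2^b/r⌋ or ⌈2^b/r⌉. -/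
/-!
The fibre of `i` under `v ↦ ⌊v r / N⌋` is the interval `[⌈i N / r⌉, ⌈(i + 1) N / r⌉)`.
Its length `⌈(a + N) / r⌉ - ⌈a / r⌉` lies between `⌊N / r⌋` and `⌈N / r⌉`, because
`⌈x⌉ + ⌊y⌋ ≤ ⌈x + y⌉ ≤ ⌈x⌉ + ⌈y⌉`; as `⌈N / r⌉ ≤ ⌊N / r⌋ + 1`, it is one of the two.
-/

open Finset

namespace Nat

variable {r : ℕ}

lemma ceilDiv_add_div_le_ceilDiv_add (hr : 0 < r) (a n : ℕ) :
    a ⌈/⌉ r + n / r ≤ (a + n) ⌈/⌉ r := by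
  rw [ceilDiv_eq_add_pred_div, ceilDiv_eq_add_pred_div, ← Nat.add_mul_div_left _ _ hr]
  exact Nat.div_le_div_right (by have := Nat.mul_div_le n r; omega)

lemma ceilDiv_add_le_ceilDiv_add_ceilDiv (hr : 0 < r) (a n : ℕ) :
    (a + n) ⌈/⌉ r ≤ a ⌈/⌉ r + n ⌈/⌉ r := by
  rw [ceilDiv_le_iff_le_mul hr, Nat.mul_add]
  exact Nat.add_le_add (le_smul_ceilDiv hr) (le_smul_ceilDiv hr)

lemma ceilDiv_le_div_add_one (hr : 0 < r) (n : ℕ) : n ⌈/⌉ r ≤ n / r + 1 := by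
  rw [ceilDiv_le_iff_le_mul hr]
  exact (Nat.lt_mul_div_succ n hr).le

lemma ceilDiv_add_sub_ceilDiv_eq_div_or_eq_ceilDiv (hr : 0 < r) (a n : ℕ) :
    (a + n) ⌈/⌉ r - a ⌈/⌉ r = n / r ∨ (a + n) ⌈/⌉ r - a ⌈/⌉ r = n ⌈/⌉ r := by
  have lower := ceilDiv_add_div_le_ceilDiv_add hr a n
  have upper := ceilDiv_add_le_ceilDiv_add_ceilDiv hr a n
  have gap := ceilDiv_le_div_add_one hr n
  omega

lemma filter_range_mul_div_eq {N i : ℕ} (hN : 0 < N) (hi : i < r) :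
    (range N).filter (fun v => v * r / N = i) = Ico (i * N ⌈/⌉ r) ((i + 1) * N ⌈/⌉ r) := by
  have hr : 0 < r := by omega
  have fibre : ∀ v, v * r / N = i ↔ i * N ⌈/⌉ r ≤ v ∧ v < (i + 1) * N ⌈/⌉ r := by
    intro v
    rw [ceilDiv_le_iff_le_mul hr, ← not_le, ceilDiv_le_iff_le_mul hr, not_le, mul_comm r v,
      ← Nat.le_div_iff_mul_le hN, ← Nat.div_lt_iff_lt_mul hN]
    omega
  have top : (i + 1) * N ⌈/⌉ r ≤ N := by
    rw [ceilDiv_le_iff_le_mul hr]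
    exact Nat.mul_le_mul_right N hi
  ext v
  simp only [mem_filter, mem_range, mem_Ico, fibre]
  omega

end Nat

theorem stmt2_general (r b : ℕ) :
    ∀ i < r,
      ((Finset.range (2 ^ b)).filter fun v => v * r / 2 ^ b = i).card = 2 ^ b / r ∨
      ((Finset.range (2 ^ b)).filter fun v => v * r / 2 ^ b = i).card
        = (2 ^ b + r - 1) / r := by
  intro i hi
  rw [Nat.filter_range_mul_div_eq (Nat.two_pow_pos b) hi, Nat.card_Ico, add_one_mul,
    ← Nat.ceilDiv_eq_add_pred_div]
  exact Nat.ceilDiv_add_sub_ceilDiv_eq_div_or_eq_ceilDiv (by omega) _ _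

/-- Lemma 2 (i): for positive integers `r` and `b` with `r ≤ 2^b`, the map
`v ↦ ⌊v·r/2^b⌋` is a most uniform map from `[2^b]` to `[r]`: every `i ∈ [r]` has
either `⌊2^b/r⌋` or `⌈2^b/r⌉ = (2^b + r - 1)/r` preimages. -/
theorem stmt2 (r b : ℕ) (hr : 0 < r) (hb : 0 < b) (hrb : r ≤ 2 ^ b) :
    ∀ i < r,
      ((Finset.range (2 ^ b)).filter fun v => v * r / 2 ^ b = i).card = 2 ^ b / r ∨
      ((Finset.range (2 ^ b)).filter fun v => v * r / 2 ^ b = i).card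
        = (2 ^ b + r - 1) / r :=
  stmt2_general r b
end

section
/- Let r and b be positive integers with r ≤ 2^b. The map v ↦ ⌊v·r/2^b⌋ restricted to the domain {1, 2, ..., 2^b − 1} is most uniform into [r]: for every i ∈ [r], the number of v ∈ {1,...,2^b − 1} with ⌊v·r/2^b⌋ = i is either ⌊(2^b − 1)/r⌋ or ⌈(2^b − 1)/r⌉. -/
/-!
For `v ≥ 1` the condition `⌊v r / N⌋ = i` reads `i N ≤ v r < (i + 1) N`, so the fibre of `i` is
the integer interval `((i N - 1) / r, ((i + 1) N - 1) / r]`. Shifting both ends by `N` moves a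
floor quotient by `⌊(N - 1) / r⌋` plus at most one carry, so every fibre has `m` or `m + 1`
elements, `m = ⌊(N - 1) / r⌋`. This alone makes a map into `[r]` most uniform: with `n` points in
total, a fibre of size `m` leaves at most `(r - 1)(m + 1)` for the others, so `r m ≤ n < r (m + 1)`;
a fibre of size `m + 1` similarly gives `r m < n ≤ r (m + 1)`.
-/

open Finset

-- `⌈n / r⌉` is written `(n + r - 1) / r`.
def IsMostUniform {α : Type*} (s : Finset α) (f : α → ℕ) (r : ℕ) : Prop :=
  ∀ i < r, #{v ∈ s | f v = i} = #s / r ∨ #{v ∈ s | f v = i} = (#s + r - 1) / r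

theorem isMostUniform_of_card_fiber_mem_Icc {α : Type*} {s : Finset α} {f : α → ℕ} {r m : ℕ}
    (hf : ∀ v ∈ s, f v < r) (hm : ∀ i < r, #{v ∈ s | f v = i} ∈ Set.Icc m (m + 1)) :
    IsMostUniform s f r := by
  intro i hi
  set c : ℕ → ℕ := fun j => #{v ∈ s | f v = j}
  have hs : #s = c i + ∑ j ∈ (range r).erase i, c j := by
    rw [add_sum_erase _ _ (mem_range.2 hi)]
    exact card_eq_sum_card_fiberwise fun v hv => mem_range.2 (hf v hv)
  have hcard : #((range r).erase i) = r - 1 := by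
    rw [card_erase_of_mem (mem_range.2 hi), card_range]
  have hrest_lo : (r - 1) * m ≤ ∑ j ∈ (range r).erase i, c j := by
    simpa [hcard] using card_nsmul_le_sum ((range r).erase i) c m fun j hj =>
      (hm j (mem_range.1 (mem_of_mem_erase hj))).1
  have hrest_hi : ∑ j ∈ (range r).erase i, c j ≤ (r - 1) * (m + 1) := by
    simpa [hcard] using sum_le_card_nsmul ((range r).erase i) c (m + 1) fun j hj =>
      (hm j (mem_range.1 (mem_of_mem_erase hj))).2
  obtain ⟨hlo, hhi⟩ : c i ∈ Set.Icc m (m + 1) := hm i hi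
  show c i = #s / r ∨ c i = (#s + r - 1) / r
  generalize ∑ j ∈ (range r).erase i, c j = rest at hs hrest_lo hrest_hi
  generalize c i = a at hs hlo hhi ⊢
  obtain ⟨k, rfl⟩ : ∃ k, r = k + 1 := ⟨r - 1, by omega⟩
  rw [add_tsub_cancel_right] at hrest_lo hrest_hi
  rw [Nat.add_succ_sub_one]
  rcases (show a = m ∨ a = m + 1 by omega) with rfl | rfl
  · exact .inl (Nat.div_eq_of_lt_le (by nlinarith) (by nlinarith)).symm
  · exact .inr (Nat.div_eq_of_lt_le (by nlinarith) (by nlinarith)).symm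

theorem Nat.le_sub_one_div_iff_mul_lt {v y r : ℕ} (hr : 0 < r) (hv : 0 < v) :
    v ≤ (y - 1) / r ↔ v * r < y := by
  rw [Nat.le_div_iff_mul_le hr]
  have : 0 < v * r := Nat.mul_pos hv hr
  omega

theorem Nat.add_sub_one_div_sub_sub_one_div_mem_Icc {N r : ℕ} (y : ℕ) (hr : 0 < r) :
    (y + N - 1) / r - (y - 1) / r ∈ Set.Icc ((N - 1) / r) ((N - 1) / r + 1) := by
  obtain _ | x := y
  · simp
  rw [Nat.add_sub_cancel, Nat.add_right_comm, Nat.add_sub_cancel]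
  constructor
  · have := Nat.div_add_div_le_add_div (x := x) (y := N) (z := r)
    have := Nat.div_le_div_right (c := r) (N.sub_le 1)
    omega
  · have hsplit : (x + N) / r = (x % r + N) / r + x / r := by
      rw [← Nat.add_mul_div_right _ _ hr, Nat.add_right_comm, Nat.mod_add_div']
    have hcarry : (x % r + N) / r ≤ (N - 1) / r + 1 := by
      rw [← Nat.add_div_right _ hr]
      have := x.mod_lt hr
      exact Nat.div_le_div_right (by omega)
    rwa [hsplit, Nat.add_sub_cancel]

-- For `i = 0` the left end is the truncated `(0 - 1) / r = 0`, which excludes `v = 0`.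
theorem filter_mul_div_eq_eq_Ioc {N r i : ℕ} (hN : 0 < N) (hr : 0 < r) (hi : i < r) :
    {v ∈ Ioo 0 N | v * r / N = i} = Ioc ((i * N - 1) / r) (((i + 1) * N - 1) / r) := by
  ext v
  simp only [mem_filter, mem_Ioo, mem_Ioc, Nat.div_eq_iff hN, add_one_mul i N]
  constructor
  · rintro ⟨⟨hv, -⟩, hlo, hhi⟩
    rw [← not_le, Nat.le_sub_one_div_iff_mul_lt hr hv, Nat.le_sub_one_div_iff_mul_lt hr hv]
    omega
  · rintro ⟨hlo, hhi⟩
    have hv : 0 < v := (Nat.zero_le _).trans_lt hlo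
    rw [← not_le, Nat.le_sub_one_div_iff_mul_lt hr hv] at hlo
    rw [Nat.le_sub_one_div_iff_mul_lt hr hv] at hhi
    have hvN : v * r < N * r := by nlinarith
    exact ⟨⟨hv, Nat.lt_of_mul_lt_mul_right hvN⟩, by omega, by omega⟩

theorem isMostUniform_mul_div {N r : ℕ} (hN : 0 < N) (hr : 0 < r) :
    IsMostUniform (Ioo 0 N) (fun v => v * r / N) r := by
  refine isMostUniform_of_card_fiber_mem_Icc (m := (N - 1) / r) (fun v hv => ?_) fun i hi => ?_
  · exact Nat.div_lt_of_lt_mul (Nat.mul_lt_mul_of_pos_right (mem_Ioo.1 hv).2 hr)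
  · rw [filter_mul_div_eq_eq_Ioc hN hr hi, Nat.card_Ioc, add_one_mul]
    exact Nat.add_sub_one_div_sub_sub_one_div_mem_Icc _ hr

theorem stmt3_general (r b : ℕ) (hr : 0 < r) :
    ∀ i < r,
      ((Finset.Ioo 0 (2 ^ b)).filter fun v => v * r / 2 ^ b = i).card
        = (2 ^ b - 1) / r ∨
      ((Finset.Ioo 0 (2 ^ b)).filter fun v => v * r / 2 ^ b = i).card
        = (2 ^ b - 1 + r - 1) / r := by
  simpa only [IsMostUniform, Nat.card_Ioo, Nat.sub_zero] using
    isMostUniform_mul_div (Nat.two_pow_pos b) hr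

/-- Lemma 2 (ii): for positive integers `r` and `b` with `r ≤ 2^b`, the map
`v ↦ ⌊v·r/2^b⌋` restricted to `{1, ..., 2^b - 1}` is a most uniform map into `[r]`:
every `i ∈ [r]` has either `⌊(2^b - 1)/r⌋` or `⌈(2^b - 1)/r⌉ = (2^b - 1 + r - 1)/r`
preimages. -/
theorem stmt3 (r b : ℕ) (hr : 0 < r) (hb : 0 < b) (hrb : r ≤ 2 ^ b) :
    ∀ i < r,
      ((Finset.Ioo 0 (2 ^ b)).filter fun v => v * r / 2 ^ b = i).card
        = (2 ^ b - 1) / r ∨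
      ((Finset.Ioo 0 (2 ^ b)).filter fun v => v * r / 2 ^ b = i).card
        = (2 ^ b - 1 + r - 1) / r :=
  stmt3_general r b hr
end

section
/- Let i : [u] → [r] and s : [u] → {−1,1} be random functions on a probability space satisfying: (Sign Cancellation for k = 4) for every j ≤ 4, every j distinct keys x₀,...,x_{j−1} ∈ [u], and every real-valued function A of (i(x₀),...,i(x_{j−1}), s(x₁),...,s(x_{j−1})), E[s(x₀)·A] = 0; and ((1+ε)/r-low collision probability) for all distinct x ≠ y, Pr[i(x) = i(y)] ≤ (1+ε)/r. Then for any values f : [u] → ℤ, the Count Sketch estimator X satisfies E[X] = F₂ and Var[X] ≤ 2(1+ε)(F₂² − F₄)/r ≤ 2(1+ε)F₂²/r, where F₂ = Σ_x f(x)² and F₄ = Σ_x f(x)⁴. -/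
/-!
Expanding the square, `X = F₂ + Y` with `Y = ∑_{x ≠ y} s(x) s(y) f(x) f(y) [i(x) = i(y)]`.
Each cross term has mean zero by sign cancellation for the two keys `x, y`, so `E[X] = F₂`.
In `E[Y²]`, the product of the cross terms of `(x, y)` and `(z, w)` contains a key occurring
exactly once unless `{z, w} = {x, y}`, and sign cancellation for the at most four keys involved
kills it. The two surviving terms per ordered pair give
`Var[X] = 2 ∑_{x ≠ y} f(x)² f(y)² Pr[i(x) = i(y)]`, and low collision probability bounds this by
`2 (1 + ε) / r · (F₂² - F₄)`.
-/

open MeasureTheory ProbabilityTheory Finset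

namespace CountSketch

variable {Ω ι κ : Type*}

lemma sum_sum_eq_sum_add_sum_offDiag {M : Type*} [AddCommMonoid M] [Fintype ι] [DecidableEq ι]
    (g : ι → ι → M) : ∑ x, ∑ y, g x y = ∑ x, g x x + ∑ p ∈ univ.offDiag, g p.1 p.2 := by
  rw [← sum_product', ← diag_union_offDiag, sum_union (disjoint_diag_offDiag _), sum_diag]

lemma sum_offDiag_mul [Fintype ι] [DecidableEq ι] (g : ι → ℝ) :
    ∑ p ∈ univ.offDiag, g p.1 * g p.2 = (∑ x, g x) ^ 2 - ∑ x, g x ^ 2 := by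
  rw [sq, sum_mul_sum, sum_sum_eq_sum_add_sum_offDiag]
  simp [sq]

lemma sum_sq_sum_mul_ite_eq [Fintype ι] [Fintype κ] [DecidableEq κ] (c : ι → ℝ) (b : ι → κ) :
    ∑ j, (∑ x, c x * if b x = j then 1 else 0) ^ 2 =
      ∑ x, ∑ y, c x * c y * if b x = b y then 1 else 0 := by
  simp only [sq, sum_mul_sum, mul_ite, mul_one, mul_zero, ite_mul, zero_mul]
  rw [sum_comm]
  refine sum_congr rfl fun x _ => ?_
  rw [sum_comm]
  refine sum_congr rfl fun y _ => ?_
  split_ifs with h <;> simp [h, eq_comm]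

section Estimator

variable [DecidableEq κ] (i : Ω → ι → κ) (s : Ω → ι → ℝ) (f : ι → ℝ)

def crossTerm (x y : ι) (ω : Ω) : ℝ :=
  s ω x * f x * (s ω y * f y) * if i ω x = i ω y then 1 else 0

variable [Fintype ι] [Fintype κ] in
def countSketch (ω : Ω) : ℝ :=
  ∑ j, (∑ x, s ω x * f x * if i ω x = j then 1 else 0) ^ 2

variable {i s}

lemma crossTerm_comm (x y : ι) : crossTerm i s f x y = crossTerm i s f y x := by
  ext ω
  simp only [crossTerm, eq_comm (a := i ω x)]
  ring

lemma abs_crossTerm_le (hs : ∀ ω x, s ω x ^ 2 = 1) (x y : ι) (ω : Ω) :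
    |crossTerm i s f x y ω| ≤ |f x| * |f y| := by
  have habs : ∀ x, |s ω x| = 1 := fun x => by
    rw [← pow_eq_one_iff_of_nonneg (abs_nonneg _) two_ne_zero, sq_abs, hs]
  simp only [crossTerm, abs_mul, habs, one_mul]
  split_ifs <;> simp [abs_nonneg, mul_nonneg]

lemma countSketch_eq [Fintype ι] [DecidableEq ι] [Fintype κ] (hs : ∀ ω x, s ω x ^ 2 = 1)
    (ω : Ω) :
    countSketch i s f ω = ∑ x, f x ^ 2 + ∑ p ∈ univ.offDiag, crossTerm i s f p.1 p.2 ω := by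
  rw [countSketch, sum_sq_sum_mul_ite_eq, sum_sum_eq_sum_add_sum_offDiag]
  congr 1
  refine sum_congr rfl fun x _ => ?_
  simp only [if_true, mul_one]
  linear_combination f x ^ 2 * hs ω x

end Estimator

section SignCancellation

variable [MeasurableSpace Ω]

/-- `A` encodes a function of `i(x₀), …, i(x_{j-1})` and `s(x₁), …, s(x_{j-1})`: it may not
depend on the sign at index `0`. -/
def SignCancellation (k : ℕ) (μ : Measure Ω) (i : Ω → ι → κ) (s : Ω → ι → ℝ) : Prop :=
  ∀ j : ℕ, j ≤ k → ∀ hj0 : 0 < j, ∀ x : Fin j → ι, Function.Injective x →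
    ∀ A : (Fin j → κ) → (Fin j → ℝ) → ℝ,
    (∀ (iv : Fin j → κ) (sv sv' : Fin j → ℝ),
      (∀ m : Fin j, m ≠ ⟨0, hj0⟩ → sv m = sv' m) → A iv sv = A iv sv') →
    ∫ ω, s ω (x ⟨0, hj0⟩) * A (fun m => i ω (x m)) (fun m => s ω (x m)) ∂μ = 0

variable {μ : Measure Ω} {i : Ω → ι → κ} {s : Ω → ι → ℝ}

lemma SignCancellation.mono {k k' : ℕ} (h : SignCancellation k' μ i s) (hk : k ≤ k') :
    SignCancellation k μ i s :=
  fun j hj => h j (hj.trans hk)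

lemma SignCancellation.integral_mul_eq_zero {k : ℕ} (h : SignCancellation k μ i s)
    [DecidableEq ι] {a : ι} {K : Finset ι} (hK : #K < k) (ha : a ∉ K)
    (G : (ι → κ) → (ι → ℝ) → ℝ)
    (hG : ∀ iv iv' sv sv', (∀ x ∈ insert a K, iv x = iv' x) → (∀ x ∈ K, sv x = sv' x) →
      G iv sv = G iv' sv') :
    ∫ ω, s ω a * G (i ω) (s ω) ∂μ = 0 := by
  -- Enumerate `insert a K` with `a` first and pull `G` back along a left inverse `ρ`.
  set x : Fin (#K + 1) → ι := Fin.cons a fun m => K.equivFin.symm m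
  have hx : Function.Injective x :=
    Fin.cons_injective_iff.mpr ⟨fun ⟨m, hm⟩ => ha (hm ▸ (K.equivFin.symm m).2),
      Subtype.val_injective.comp K.equivFin.symm.injective⟩
  set ρ := Function.invFun x
  have hxρ : ∀ y ∈ insert a K, x (ρ y) = y := by
    intro y hy
    refine Function.invFun_eq ?_
    rcases mem_insert.mp hy with rfl | hy
    · exact ⟨0, rfl⟩
    · exact ⟨(K.equivFin ⟨y, hy⟩).succ, by simp [x]⟩
  have hρ : ∀ y ∈ K, ρ y ≠ 0 := fun y hy h0 => by
    have := hxρ y (mem_insert_of_mem hy)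
    rw [h0] at this
    exact ha (this ▸ hy : x 0 ∈ K)
  refine (integral_congr_ae (ae_of_all _ fun ω => ?_)).trans
    (h (#K + 1) hK (Nat.succ_pos _) x hx (fun iv sv => G (iv ∘ ρ) (sv ∘ ρ))
      fun iv sv sv' hsv => hG _ _ _ _ (fun _ _ => rfl) fun y hy => hsv _ (hρ y hy))
  exact congrArg _ (hG _ _ _ _ (fun y hy => by simp [hxρ y hy])
    fun y hy => by simp [hxρ y (mem_insert_of_mem hy)]).symm

variable [DecidableEq κ] (f : ι → ℝ)

lemma integral_crossTerm (h : SignCancellation 2 μ i s) {x y : ι} (hxy : x ≠ y) :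
    ∫ ω, crossTerm i s f x y ω ∂μ = 0 := by
  classical
  refine (integral_congr_ae (ae_of_all _ fun ω => ?_)).trans
    (h.integral_mul_eq_zero (a := x) (K := {y}) (by simp) (by simpa using hxy)
      (fun iv sv => sv y * f x * f y * if iv x = iv y then 1 else 0) ?_)
  · simp only [crossTerm]
    ring
  · intro iv iv' sv sv' hiv hsv
    simp [hiv x (by simp), hiv y (by simp), hsv y (by simp)]

lemma integral_crossTerm_mul_crossTerm_of_ne (h : SignCancellation 4 μ i s) {x y z w : ι}
    (hxy : x ≠ y) (hxz : x ≠ z) (hxw : x ≠ w) :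
    ∫ ω, crossTerm i s f x y ω * crossTerm i s f z w ω ∂μ = 0 := by
  classical
  refine (integral_congr_ae (ae_of_all _ fun ω => ?_)).trans
    (h.integral_mul_eq_zero (a := x) (K := {y, z, w}) (card_le_three.trans_lt (by norm_num))
      (by simp [hxy, hxz, hxw])
      (fun iv sv => sv y * f x * f y * (sv z * f z * (sv w * f w)) *
        ((if iv x = iv y then 1 else 0) * if iv z = iv w then 1 else 0)) ?_)
  · simp only [crossTerm]
    ring
  · intro iv iv' sv sv' hiv hsv
    simp [hiv x (by simp), hiv y (by simp), hiv z (by simp), hiv w (by simp),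
      hsv y (by simp), hsv z (by simp), hsv w (by simp)]

end SignCancellation

section Moments

variable [MeasurableSpace Ω] [MeasurableSpace κ] [MeasurableEq κ]
  {μ : Measure Ω} {i : Ω → ι → κ} {s : Ω → ι → ℝ}

lemma measurableSet_collision (himeas : ∀ x, Measurable fun ω => i ω x) (x y : ι) :
    MeasurableSet {ω | i ω x = i ω y} :=
  measurableSet_eq_fun (himeas x) (himeas y)

variable [DecidableEq κ] (f : ι → ℝ)

lemma measurable_crossTerm (himeas : ∀ x, Measurable fun ω => i ω x)
    (hsmeas : ∀ x, Measurable fun ω => s ω x) (x y : ι) : Measurable (crossTerm i s f x y) :=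
  (((hsmeas x).mul_const _).mul ((hsmeas y).mul_const _)).mul
    (Measurable.ite (measurableSet_collision himeas x y) measurable_const measurable_const)

lemma integral_crossTerm_mul_self (himeas : ∀ x, Measurable fun ω => i ω x)
    (hs : ∀ ω x, s ω x ^ 2 = 1) (x y : ι) :
    ∫ ω, crossTerm i s f x y ω * crossTerm i s f x y ω ∂μ =
      f x ^ 2 * f y ^ 2 * μ.real {ω | i ω x = i ω y} := by
  have hsq : ∀ ω, crossTerm i s f x y ω * crossTerm i s f x y ω =
      f x ^ 2 * f y ^ 2 * {ω | i ω x = i ω y}.indicator 1 ω := fun ω => by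
    by_cases hxy : i ω x = i ω y
    · simp only [crossTerm, hxy, Set.indicator_apply, Set.mem_ofPred_eq, if_true, Pi.one_apply]
      linear_combination f x ^ 2 * f y ^ 2 * (s ω y ^ 2 * hs ω x + hs ω y)
    · simp [crossTerm, hxy]
  simp only [hsq, integral_const_mul, integral_indicator_one (measurableSet_collision himeas x y)]

lemma integral_crossTerm_mul_crossTerm [DecidableEq ι] (h : SignCancellation 4 μ i s)
    (himeas : ∀ x, Measurable fun ω => i ω x) (hs : ∀ ω x, s ω x ^ 2 = 1)
    {p q : ι × ι} (hp : p.1 ≠ p.2) (hq : q.1 ≠ q.2) :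
    ∫ ω, crossTerm i s f p.1 p.2 ω * crossTerm i s f q.1 q.2 ω ∂μ =
      (if q = p then f p.1 ^ 2 * f p.2 ^ 2 * μ.real {ω | i ω p.1 = i ω p.2} else 0) +
      (if q = p.swap then f p.1 ^ 2 * f p.2 ^ 2 * μ.real {ω | i ω p.1 = i ω p.2} else 0) := by
  obtain ⟨x, y⟩ := p
  obtain ⟨z, w⟩ := q
  dsimp only [Prod.swap_prod_mk] at hp hq ⊢
  by_cases hdiag : (z, w) = (x, y)
  · obtain ⟨rfl, rfl⟩ := Prod.mk.inj hdiag
    simp [hp, integral_crossTerm_mul_self f himeas hs]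
  by_cases hanti : (z, w) = (y, x)
  · obtain ⟨rfl, rfl⟩ := Prod.mk.inj hanti
    simp [hp, crossTerm_comm f z w, integral_crossTerm_mul_self f himeas hs]
  rw [if_neg hdiag, if_neg hanti, add_zero]
  -- Some key occurs exactly once among `x, y, z, w`: `w` if `x = z`, `z` if `x = w`, else `x`.
  by_cases hxz : x = z
  · subst hxz
    have hwy : w ≠ y := fun hwy => hdiag (by rw [hwy])
    rw [crossTerm_comm f x w]
    refine (integral_congr_ae (ae_of_all _ fun ω => mul_comm _ _)).trans ?_
    exact integral_crossTerm_mul_crossTerm_of_ne f h (Ne.symm hq) (Ne.symm hq) hwy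
  by_cases hxw : x = w
  · subst hxw
    have hzy : z ≠ y := fun hzy => hanti (by rw [hzy])
    refine (integral_congr_ae (ae_of_all _ fun ω => mul_comm _ _)).trans ?_
    exact integral_crossTerm_mul_crossTerm_of_ne f h hq hq hzy
  exact integral_crossTerm_mul_crossTerm_of_ne f h hp hxz hxw

section Finite

variable (μ) [IsFiniteMeasure μ]

lemma integrable_crossTerm (himeas : ∀ x, Measurable fun ω => i ω x)
    (hsmeas : ∀ x, Measurable fun ω => s ω x) (hs : ∀ ω x, s ω x ^ 2 = 1) (x y : ι) :
    Integrable (crossTerm i s f x y) μ :=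
  .of_bound (measurable_crossTerm f himeas hsmeas x y).aestronglyMeasurable _
    (ae_of_all _ fun ω => abs_crossTerm_le f hs x y ω)

lemma integrable_crossTerm_mul (himeas : ∀ x, Measurable fun ω => i ω x)
    (hsmeas : ∀ x, Measurable fun ω => s ω x) (hs : ∀ ω x, s ω x ^ 2 = 1) (x y z w : ι) :
    Integrable (fun ω => crossTerm i s f x y ω * crossTerm i s f z w ω) μ :=
  .of_bound ((measurable_crossTerm f himeas hsmeas x y).mul
    (measurable_crossTerm f himeas hsmeas z w)).aestronglyMeasurable _
    (ae_of_all _ fun ω => by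
      rw [Real.norm_eq_abs, abs_mul]
      exact mul_le_mul (abs_crossTerm_le f hs x y ω) (abs_crossTerm_le f hs z w ω)
        (abs_nonneg _) (by positivity))

lemma integral_sum_offDiag_crossTerm [Fintype ι] [DecidableEq ι] (h : SignCancellation 2 μ i s)
    (himeas : ∀ x, Measurable fun ω => i ω x) (hsmeas : ∀ x, Measurable fun ω => s ω x)
    (hs : ∀ ω x, s ω x ^ 2 = 1) :
    ∫ ω, ∑ p ∈ univ.offDiag, crossTerm i s f p.1 p.2 ω ∂μ = 0 := by
  rw [integral_finsetSum _ fun p _ => integrable_crossTerm μ f himeas hsmeas hs p.1 p.2]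
  exact sum_eq_zero fun p hp => integral_crossTerm f h (mem_offDiag.mp hp).2.2

end Finite

variable [Fintype ι] [DecidableEq ι] [Fintype κ] [IsProbabilityMeasure μ]

lemma integral_countSketch (himeas : ∀ x, Measurable fun ω => i ω x)
    (hsmeas : ∀ x, Measurable fun ω => s ω x) (hs : ∀ ω x, s ω x ^ 2 = 1)
    (h : SignCancellation 2 μ i s) :
    ∫ ω, countSketch i s f ω ∂μ = ∑ x, f x ^ 2 := by
  simp_rw [countSketch_eq f hs]
  rw [integral_add (integrable_const _)
      (integrable_finsetSum _ fun p _ => integrable_crossTerm μ f himeas hsmeas hs p.1 p.2),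
    integral_sum_offDiag_crossTerm μ f h himeas hsmeas hs]
  simp

lemma variance_countSketch (himeas : ∀ x, Measurable fun ω => i ω x)
    (hsmeas : ∀ x, Measurable fun ω => s ω x) (hs : ∀ ω x, s ω x ^ 2 = 1)
    (h : SignCancellation 4 μ i s) :
    variance (countSketch i s f) μ =
      2 * ∑ p ∈ univ.offDiag, f p.1 ^ 2 * f p.2 ^ 2 * μ.real {ω | i ω p.1 = i ω p.2} := by
  have hY : Measurable fun ω => ∑ p ∈ univ.offDiag, crossTerm i s f p.1 p.2 ω :=
    Finset.measurable_sum _ fun p _ => measurable_crossTerm f himeas hsmeas p.1 p.2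
  rw [show countSketch i s f = _ from funext (countSketch_eq f hs),
    variance_const_add hY.aestronglyMeasurable,
    variance_of_integral_eq_zero hY.aemeasurable
      (integral_sum_offDiag_crossTerm μ f (h.mono (by norm_num)) himeas hsmeas hs)]
  simp_rw [sq, sum_mul_sum]
  rw [integral_finsetSum _ fun p _ => integrable_finsetSum _ fun q _ =>
    integrable_crossTerm_mul μ f himeas hsmeas hs _ _ _ _, mul_sum]
  refine sum_congr rfl fun p hp => ?_
  rw [integral_finsetSum _ fun q _ => integrable_crossTerm_mul μ f himeas hsmeas hs _ _ _ _,
    sum_congr rfl fun q hq => integral_crossTerm_mul_crossTerm f h himeas hs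
      (mem_offDiag.mp hp).2.2 (mem_offDiag.mp hq).2.2,
    sum_add_distrib, sum_ite_eq', sum_ite_eq', if_pos hp,
    if_pos (by simpa [mem_offDiag, eq_comm] using hp)]
  ring

end Moments

end CountSketch

open CountSketch

/-- Lemma 3 (Count Sketch in the classical case): if the random functions
`i : [u] → [r]` and `s : [u] → {-1,1}` have Sign Cancellation for `k = 4` and
`(1+ε)/r`-low collision probability, then the Count Sketch estimator `X` satisfies
`E[X] = F₂` and `Var[X] ≤ 2(1+ε)(F₂² - F₄)/r ≤ 2(1+ε)F₂²/r`. -/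
theorem stmt5
    {Ω : Type*} [MeasureSpace Ω] [IsProbabilityMeasure (ℙ : Measure Ω)]
    (u r : ℕ) (ε : ℝ) (hε : 0 ≤ ε)
    (i : Ω → Fin u → Fin r)
    (s : Ω → Fin u → ℝ)
    (himeas : ∀ x : Fin u, Measurable fun ω => i ω x)
    (hsmeas : ∀ x : Fin u, Measurable fun ω => s ω x)
    (hsval : ∀ ω x, s ω x = 1 ∨ s ω x = -1)
    (hcancel : ∀ j : ℕ, j ≤ 4 → ∀ hj0 : 0 < j,
      ∀ x : Fin j → Fin u, Function.Injective x →
      ∀ A : (Fin j → Fin r) → (Fin j → ℝ) → ℝ,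
      (∀ (iv : Fin j → Fin r) (sv sv' : Fin j → ℝ),
        (∀ m : Fin j, m ≠ ⟨0, hj0⟩ → sv m = sv' m) → A iv sv = A iv sv') →
      ∫ ω, s ω (x ⟨0, hj0⟩) * A (fun m => i ω (x m)) (fun m => s ω (x m)) = 0)
    (hcoll : ∀ x y : Fin u, x ≠ y →
      (ℙ {ω | i ω x = i ω y}).toReal ≤ (1 + ε) / r)
    (f : Fin u → ℤ)
    (X : Ω → ℝ)
    (hX : ∀ ω, X ω = ∑ j : Fin r,
      (∑ x : Fin u, s ω x * (f x : ℝ) * (if i ω x = j then 1 else 0)) ^ 2)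
    (F₂ F₄ : ℝ) (hF₂ : F₂ = ∑ x : Fin u, (f x : ℝ) ^ 2)
    (hF₄ : F₄ = ∑ x : Fin u, (f x : ℝ) ^ 4) :
    (∫ ω, X ω) = F₂ ∧
    variance X ℙ ≤ 2 * (1 + ε) * (F₂ ^ 2 - F₄) / r ∧
    2 * (1 + ε) * (F₂ ^ 2 - F₄) / r ≤ 2 * (1 + ε) * F₂ ^ 2 / r := by
  have hs : ∀ ω x, s ω x ^ 2 = 1 := fun ω x => by rcases hsval ω x with h | h <;> simp [h]
  have hSC : SignCancellation 4 ℙ i s := hcancel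
  have hXcs : X = countSketch i s fun x => (f x : ℝ) := funext hX
  have hF₄_nonneg : 0 ≤ F₄ := hF₄ ▸ sum_nonneg fun x _ => by positivity
  refine ⟨?_, ?_, by gcongr; linarith⟩
  · rw [hXcs, integral_countSketch _ himeas hsmeas hs (hSC.mono (by norm_num)), hF₂]
  · rw [hXcs, variance_countSketch _ himeas hsmeas hs hSC]
    calc 2 * ∑ p ∈ univ.offDiag,
            (f p.1 : ℝ) ^ 2 * f p.2 ^ 2 * Measure.real ℙ {ω | i ω p.1 = i ω p.2}
        ≤ 2 * ∑ p ∈ univ.offDiag, (f p.1 : ℝ) ^ 2 * f p.2 ^ 2 * ((1 + ε) / r) := by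
          gcongr with p hp
          exact hcoll _ _ (mem_offDiag.mp hp).2.2
      _ = 2 * (1 + ε) * (F₂ ^ 2 - F₄) / r := by
          rw [← sum_mul, sum_offDiag_mul fun x => (f x : ℝ) ^ 2, hF₂, hF₄]
          simp_rw [← pow_mul]
          ring
end

section
/- Let b ≥ 2, p = 2^b − 1, and 1 ≤ r ≤ 2^{b−1}. Let h(x) be uniformly distributed on [p] and define h_x = h(x) + 1, j_x = h_x mod 2^{b−1}, and i_x = ⌊r · j_x / 2^{b−1}⌋. Then Pr[i_x = 0] ≤ (1 + r/2^b)/r. -/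
/-! With `N = 2^(b-1)`, the value `h_x = h(x) + 1` ranges over `[1, 2N)`, and `i_x = 0` exactly
when `j_x = h_x mod N ≤ q := ⌊(N - 1)/r⌋`. Such `h_x` lie in `[1, q] ∪ [N, N + q]`, so at most
`2q + 1` of the `p = 2N - 1` equally likely values of `h(x)` qualify, and
`(2q + 1)/(2N - 1) ≤ (1 + r/2N)/r` follows from `rq < N` and `r ≤ 2N`. -/

open MeasureTheory ProbabilityTheory Finset

theorem measure_preimage_finset_of_forall_fiber_eq {α β : Type*} [MeasurableSpace α]
    [MeasurableSpace β] [MeasurableSingletonClass β] {μ : Measure α} {f : α → β}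
    (hf : Measurable f) {c : ENNReal} (hc : ∀ y, μ (f ⁻¹' {y}) = c) (s : Finset β) :
    μ (f ⁻¹' s) = #s * c := by
  rw [← sum_measure_preimage_singleton s fun y _ => hf (measurableSet_singleton y)]
  simp [hc]

theorem card_filter_succ_mod_le {p N : ℕ} (hp : p < 2 * N) (q : ℕ) :
    #{y : Fin p | ((y : ℕ) + 1) % N ≤ q} ≤ 2 * q + 1 := by
  have hmaps : ∀ y ∈ ({y : Fin p | ((y : ℕ) + 1) % N ≤ q} : Finset (Fin p)),
      (y : ℕ) + 1 ∈ Icc 1 q ∪ Icc N (N + q) := by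
    intro y hy
    simp only [mem_filter, mem_univ, true_and] at hy
    have hdiv : ((y : ℕ) + 1) / N < 2 := Nat.div_lt_of_lt_mul (by omega)
    have := Nat.div_add_mod ((y : ℕ) + 1) N
    simp only [mem_union, mem_Icc]
    interval_cases ((y : ℕ) + 1) / N <;> omega
  calc #{y : Fin p | ((y : ℕ) + 1) % N ≤ q}
      ≤ #(Icc 1 q ∪ Icc N (N + q)) :=
        card_le_card_of_injOn _ hmaps fun y _ z _ h => Fin.ext (by simpa using h)
    _ ≤ #(Icc 1 q) + #(Icc N (N + q)) := card_union_le _ _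
    _ = 2 * q + 1 := by simp; omega

theorem mul_div_eq_zero_iff_le_pred_div {r N : ℕ} (hr : 0 < r) (hN : 0 < N) (j : ℕ) :
    r * j / N = 0 ↔ j ≤ (N - 1) / r := by
  rw [Nat.le_div_iff_mul_le hr, Nat.div_eq_zero_iff, mul_comm]
  omega

theorem two_mul_add_one_div_le_one_add_div_div {N r q : ℕ} (hr : 0 < r) (hrN : r ≤ 2 * N)
    (hq : r * q < N) :
    (2 * q + 1 : ℝ) / (2 * N - 1) ≤ (1 + r / (2 * N)) / r := by
  have hN : (1 : ℝ) ≤ N := by exact_mod_cast (show 1 ≤ N by omega)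
  have hrR : (0 : ℝ) < r := by exact_mod_cast hr
  have hrN' : (r : ℝ) ≤ 2 * N := by exact_mod_cast hrN
  have hq' : (r : ℝ) * q + 1 ≤ N := by exact_mod_cast hq
  rw [div_le_div_iff₀ (by linarith) hrR, one_add_div (by positivity), div_mul_eq_mul_div,
    le_div_iff₀ (by positivity)]
  nlinarith

theorem stmt7_general
    {Ω : Type*} [MeasureSpace Ω]
    (b p r : ℕ) (hb : 2 ≤ b) (hp : p = 2 ^ b - 1) (hr : 1 ≤ r) (hrb : r ≤ 2 ^ (b - 1))
    (h : Ω → Fin p) (hmeas : Measurable h)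
    (hunif : ∀ y : Fin p, ℙ {ω | h ω = y} = (p : ENNReal)⁻¹) :
    (ℙ {ω | r * (((h ω : ℕ) + 1) % 2 ^ (b - 1)) / 2 ^ (b - 1) = 0}).toReal
      ≤ (1 + (r : ℝ) / 2 ^ b) / r := by
  set N := 2 ^ (b - 1)
  have hN : 0 < N := Nat.two_pow_pos _
  have hbN : 2 ^ b = 2 * N := by rw [← pow_succ']; congr; omega
  set S : Finset (Fin p) := {y | r * (((y : ℕ) + 1) % N) / N = 0}
  have hevent : {ω | r * (((h ω : ℕ) + 1) % N) / N = 0} = h ⁻¹' S := by ext; simp [S]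
  have hcard : #S ≤ 2 * ((N - 1) / r) + 1 := by
    simp only [S, mul_div_eq_zero_iff_le_pred_div hr hN]
    exact card_filter_succ_mod_le (by omega) _
  have hq : r * ((N - 1) / r) < N := by
    have := Nat.mul_div_le (N - 1) r
    omega
  rw [hevent, measure_preimage_finset_of_forall_fiber_eq hmeas hunif, ENNReal.toReal_mul,
    ENNReal.toReal_inv, ENNReal.toReal_natCast, ENNReal.toReal_natCast, ← div_eq_mul_inv]
  have hpN : (p : ℝ) = 2 * N - 1 := by
    rw [hp, Nat.cast_sub (Nat.one_le_two_pow), hbN]; push_cast; ring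
  have h2b : (2 : ℝ) ^ b = 2 * N := by exact_mod_cast hbN
  calc (#S : ℝ) / p ≤ (2 * ((N - 1) / r : ℕ) + 1 : ℝ) / (2 * N - 1) := by
        rw [← hpN]
        gcongr
        exact_mod_cast hcard
    _ ≤ (1 + (r : ℝ) / 2 ^ b) / r := by
        rw [h2b]
        exact two_mul_add_one_div_le_one_add_div_div hr (by omega) hq

/-- Lemma 5, eq. (17): with `b ≥ 2`, `p = 2^b - 1`, `1 ≤ r ≤ 2^(b-1)`, `h(x)` uniform
on `[p]`, `h_x = h(x) + 1`, `j_x = h_x mod 2^(b-1)` and `i_x = ⌊r·j_x/2^(b-1)⌋`, we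
have `Pr[i_x = 0] ≤ (1 + r/2^b)/r`. -/
theorem stmt7
    {Ω : Type*} [MeasureSpace Ω] [IsProbabilityMeasure (ℙ : Measure Ω)]
    (b p r : ℕ) (hb : 2 ≤ b) (hp : p = 2 ^ b - 1) (hr : 1 ≤ r) (hrb : r ≤ 2 ^ (b - 1))
    (h : Ω → Fin p) (hmeas : Measurable h)
    (hunif : ∀ y : Fin p, ℙ {ω | h ω = y} = (p : ENNReal)⁻¹) :
    (ℙ {ω | r * (((h ω : ℕ) + 1) % 2 ^ (b - 1)) / 2 ^ (b - 1) = 0}).toReal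
      ≤ (1 + (r : ℝ) / 2 ^ b) / r :=
  stmt7_general b p r hb hp hr hrb h hmeas hunif
end

section
/- Let b ≥ 2, p = 2^b − 1, and 1 ≤ r ≤ 2^{b−1}. Let h(x) and h(y) be independent, each uniformly distributed on [p] (as holds for distinct keys x ≠ y under a 2-universal hash function into [p]), and define for z ∈ {x,y}: h_z = h(z) + 1, j_z = h_z mod 2^{b−1}, i_z = ⌊r · j_z / 2^{b−1}⌋. Then Pr[i_x = i_y] ≤ (1 + (r/2^b)²)/r. -/
/-!
Write `m = 2^(b-1)`, so that `p = 2m - 1`. As `h` runs over `1, …, 2m - 1`, the residue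
`h mod m` takes the value `0` once and every other value in `[m]` twice. The bucket
`{j : ⌊rj/m⌋ = i}` is an interval of length `nᵢ ∈ {⌊m/r⌋, ⌊m/r⌋ + 1}`, so bucket `i` receives
`cᵢ = 2nᵢ - [i = 0]` of the `p` hash values and `Pr[i_x = i_y] = ∑ cᵢ² / p²`. Writing `m = rq + s`,
one computes `r ∑ cᵢ² = p² + r(r - 1) - (r - 2s + 1)²` if `s > 0` and `p² + r - 1` if `s = 0`.
Hence `Pr[i_x = i_y] ≤ 1/r + (r - 1)/p²`, which is at most `(1 + (r/2m)²)/r` because `r ≤ m`.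
-/

open MeasureTheory ProbabilityTheory Finset

theorem Nat.filter_range_mul_div_eq_eq_Ico {m r i : ℕ} (hm : 0 < m) (hi : i < r) :
    {j ∈ range m | r * j / m = i} = Ico (i * m ⌈/⌉ r) ((i + 1) * m ⌈/⌉ r) := by
  have hr : 0 < r := by omega
  ext j
  simp only [mem_filter, mem_range, mem_Ico, ← not_le, ceilDiv_le_iff_le_mul hr,
    Nat.div_eq_iff hm, add_mul, one_mul]
  have hjm : r * j < i * m + m → j < m := fun h =>
    Nat.lt_of_mul_lt_mul_left (h.trans_le (by nlinarith))
  omega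

theorem Nat.ceilDiv_add_sub_ceilDiv_mem_Icc {a m r : ℕ} (hr : 0 < r) :
    (a + m) ⌈/⌉ r - a ⌈/⌉ r ∈ Set.Icc (m / r) (m / r + 1) := by
  have hlo := @Nat.div_add_div_le_add_div (a + r - 1) m r
  have hhi := Nat.add_div_le_div_add_div_add_one (a + r - 1) m r
  rw [show a + r - 1 + m = a + m + r - 1 by omega, ← Nat.ceilDiv_eq_add_pred_div,
    ← Nat.ceilDiv_eq_add_pred_div] at hlo hhi
  generalize m / r = q at *
  constructor <;> omega

theorem Fin.card_filter_val {n : ℕ} (P : ℕ → Prop) [DecidablePred P] :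
    #{a : Fin n | P a} = #{v ∈ range n | P v} := by
  simp only [card_filter]
  exact Fin.sum_univ_eq_sum_range (fun v => if P v then 1 else 0) n

theorem card_filter_succ_mod_add_ite {m : ℕ} (hm : 0 < m) (P : ℕ → Prop) [DecidablePred P] :
    #{v ∈ range (2 * m - 1) | P ((v + 1) % m)} + (if P 0 then 1 else 0)
      = 2 * #{j ∈ range m | P j} := by
  let f : ℕ → ℕ := fun v => if P (v % m) then 1 else 0
  have hperiod : ∑ v ∈ range m, f (m + v) = ∑ v ∈ range m, f v :=
    sum_congr rfl fun v _ => by simp only [f, Nat.add_mod_left]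
  have hrange : ∑ v ∈ range m, f v = #{j ∈ range m | P j} := by
    rw [card_filter]
    exact sum_congr rfl fun v hv => by simp only [f, Nat.mod_eq_of_lt (mem_range.1 hv)]
  calc #{v ∈ range (2 * m - 1) | P ((v + 1) % m)} + (if P 0 then 1 else 0)
      = ∑ v ∈ range (2 * m - 1 + 1), f v := by rw [sum_range_succ', card_filter]; rfl
    _ = ∑ v ∈ range (m + m), f v := by rw [show 2 * m - 1 + 1 = m + m by omega]
    _ = 2 * #{j ∈ range m | P j} := by rw [sum_range_add, hperiod, hrange, two_mul]

theorem card_filter_apply_eq_apply_eq_sum_sq {α β : Type*} [Fintype α] [DecidableEq β]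
    (f : α → β) {t : Finset β} (ht : ∀ a, f a ∈ t) :
    #{ab : α × α | f ab.1 = f ab.2} = ∑ i ∈ t, #{a | f a = i} ^ 2 := by
  rw [card_eq_sum_card_fiberwise (f := fun ab => f ab.1) (t := t) fun ab _ => ht ab.1]
  refine sum_congr rfl fun i _ => ?_
  rw [sq, ← card_product, ← filter_product, filter_filter, ← univ_product_univ]
  congr 1
  ext ⟨a, b⟩
  simp only [mem_filter, mem_product, mem_univ, true_and]
  constructor
  · rintro ⟨hab, rfl⟩; exact ⟨rfl, hab.symm⟩
  · rintro ⟨rfl, hb⟩; exact ⟨hb.symm, rfl⟩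

theorem measure_apply_eq_apply_eq_card_mul {Ω α β : Type*} [MeasurableSpace Ω] [Fintype α]
    [MeasurableSpace α] [MeasurableSingletonClass α] [DecidableEq β] {μ : Measure Ω}
    {X Y : Ω → α} (hX : Measurable X) (hY : Measurable Y) {c : ENNReal}
    (hXY : ∀ a b, μ {ω | X ω = a ∧ Y ω = b} = c) (f : α → β) :
    μ {ω | f (X ω) = f (Y ω)} = #{ab : α × α | f ab.1 = f ab.2} * c := by
  have hpre : ∀ ab : α × α, (fun ω => (X ω, Y ω)) ⁻¹' {ab} = {ω | X ω = ab.1 ∧ Y ω = ab.2} :=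
    fun ab => by ext ω; simp [Prod.ext_iff]
  have hevent : {ω | f (X ω) = f (Y ω)}
      = (fun ω => (X ω, Y ω)) ⁻¹' ↑({ab : α × α | f ab.1 = f ab.2} : Finset (α × α)) := by
    ext ω; simp
  rw [hevent, ← sum_measure_preimage_singleton _
    fun ab _ => (hX.prodMk hY) (measurableSet_singleton ab)]
  simp only [hpre, hXY, sum_const, nsmul_eq_mul]

theorem mul_sum_sq_le_sq_add_of_mem_Icc {r q m : ℕ} {n c : ℕ → ℕ} (hr : 0 < r)
    (hn : ∀ i < r, n i ∈ Set.Icc q (q + 1)) (hsum : ∑ i ∈ range r, n i = m)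
    (hn₀ : m ≤ r * n 0) (hc : ∀ i, c i + (if i = 0 then 1 else 0) = 2 * n i) :
    r * ∑ i ∈ range r, c i ^ 2 ≤ (2 * m - 1) ^ 2 + r * (r - 1) := by
  have hsq : ∑ i ∈ range r, (n i : ℤ) ^ 2 = (2 * q + 1) * m - r * q * (q + 1) := by
    have hterm : ∀ i ∈ range r, (n i : ℤ) ^ 2 = (2 * q + 1) * n i - q * (q + 1) := by
      intro i hi
      obtain ⟨hlo, hhi⟩ := hn i (mem_range.1 hi)
      obtain h | h : n i = q ∨ n i = q + 1 := by omega
      all_goals rw [h]; push_cast; ring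
    have hsumℤ : ∑ i ∈ range r, (n i : ℤ) = m := by exact_mod_cast hsum
    rw [sum_congr rfl hterm, sum_sub_distrib, ← mul_sum, hsumℤ, sum_const, card_range,
      nsmul_eq_mul]
    ring
  have hcsq : ∑ i ∈ range r, (c i : ℤ) ^ 2
      = 4 * ∑ i ∈ range r, (n i : ℤ) ^ 2 - 4 * n 0 + 1 := by
    have hterm : ∀ i ∈ range r, (c i : ℤ) ^ 2
        = 4 * (n i : ℤ) ^ 2 - if i = 0 then 4 * (n i : ℤ) - 1 else 0 := by
      intro i _
      have := hc i
      split_ifs at this ⊢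
      · rw [show (c i : ℤ) = 2 * n i - 1 by omega]; ring
      · rw [show (c i : ℤ) = 2 * n i by omega]; ring
    rw [sum_congr rfl hterm, sum_sub_distrib, ← mul_sum, sum_ite_eq' (range r),
      if_pos (mem_range.2 hr)]
    ring
  have hqm : r * q ≤ m := by
    simpa [hsum] using card_nsmul_le_sum (range r) n q fun i hi => (hn i (mem_range.1 hi)).1
  have hm : 1 ≤ m := by
    have hc₀ := hc 0
    rw [if_pos rfl] at hc₀
    have := hsum ▸ single_le_sum (fun i _ => Nat.zero_le (n i)) (mem_range.2 hr)
    omega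
  zify [show 1 ≤ 2 * m by omega, show 1 ≤ r from hr]
  rw [hcsq, hsq]
  obtain ⟨h₀lo, h₀hi⟩ := hn 0 hr
  obtain h₀ | h₀ : n 0 = q + 1 ∨ n 0 = q := by omega
  · rw [h₀]
    push_cast
    nlinarith [sq_nonneg ((r : ℤ) - 2 * (m - r * q) + 1)]
  · rw [h₀] at hn₀ ⊢
    have hmq : (m : ℤ) = r * q := by exact_mod_cast le_antisymm hn₀ hqm
    rw [hmq]
    nlinarith [sq_nonneg ((r : ℤ) - 1)]

theorem mul_sum_sq_card_filter_le {m r : ℕ} (hm : 0 < m) (hr : 0 < r) :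
    r * ∑ i ∈ range r, #{v ∈ range (2 * m - 1) | r * ((v + 1) % m) / m = i} ^ 2
      ≤ (2 * m - 1) ^ 2 + r * (r - 1) := by
  refine mul_sum_sq_le_sq_add_of_mem_Icc hr (n := fun i => #{j ∈ range m | r * j / m = i})
    (q := m / r) (fun i hi => ?_) ?_ ?_ fun i => ?_
  · rw [Nat.filter_range_mul_div_eq_eq_Ico hm hi, Nat.card_Ico, add_mul, one_mul]
    exact Nat.ceilDiv_add_sub_ceilDiv_mem_Icc hr
  · rw [← card_eq_sum_card_fiberwise fun j hj => ?_, card_range]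
    simpa [Nat.div_lt_iff_lt_mul hm, Nat.mul_lt_mul_left hr] using hj
  · rw [Nat.filter_range_mul_div_eq_eq_Ico hm hr, Nat.card_Ico, zero_mul, zero_ceilDiv, zero_add,
      one_mul, Nat.sub_zero]
    exact le_smul_ceilDiv hr
  · simpa [eq_comm] using card_filter_succ_mod_add_ite hm (fun j => r * j / m = i)

theorem div_sq_le_of_mul_le {N m p r : ℕ} (hr : 0 < r) (hrm : r ≤ m) (hp : p + 1 = 2 * m)
    (hN : r * N ≤ p ^ 2 + r * (r - 1)) :
    (N : ℝ) / p ^ 2 ≤ (1 + ((r : ℝ) / (2 * m)) ^ 2) / r := by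
  have hp₀ : (0 : ℝ) < p := by norm_cast; omega
  have hr₀ : (0 : ℝ) < r := by norm_cast
  have hm₀ : (0 : ℝ) < m := by norm_cast; omega
  have hNR : (r : ℝ) * N ≤ p ^ 2 + r * (r - 1) := by
    have := (Nat.cast_le (α := ℝ)).2 hN
    push_cast [Nat.cast_sub hr] at this
    exact this
  set t : ℝ := r / (2 * m)
  have htp : t * p = r - t := by
    have : (p : ℝ) = 2 * m - 1 := by rw [eq_sub_iff_add_eq]; exact_mod_cast hp
    simp only [t, this]
    field_simp
  have ht : 2 * r * t ≤ r := by
    have : (r : ℝ) ≤ m := by exact_mod_cast hrm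
    simp only [t]
    rw [← mul_div_assoc, div_le_iff₀ (by positivity)]
    nlinarith
  rw [div_le_div_iff₀ (by positivity) hr₀]
  calc (N : ℝ) * r ≤ p ^ 2 + r * (r - 1) := by linarith
    _ ≤ p ^ 2 + (r - t) ^ 2 := by nlinarith [sq_nonneg t]
    _ = (1 + t ^ 2) * p ^ 2 := by rw [← htp]; ring

theorem stmt8_general
    {Ω : Type*} [MeasureSpace Ω]
    (b p r : ℕ) (hb : 2 ≤ b) (hp : p = 2 ^ b - 1) (hr : 1 ≤ r) (hrb : r ≤ 2 ^ (b - 1))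
    (hx hy : Ω → Fin p) (hxmeas : Measurable hx) (hymeas : Measurable hy)
    (hjoint : ∀ y z : Fin p,
      ℙ {ω | hx ω = y ∧ hy ω = z} = (p : ENNReal)⁻¹ * (p : ENNReal)⁻¹) :
    (ℙ {ω | r * (((hx ω : ℕ) + 1) % 2 ^ (b - 1)) / 2 ^ (b - 1)
          = r * (((hy ω : ℕ) + 1) % 2 ^ (b - 1)) / 2 ^ (b - 1)}).toReal
      ≤ (1 + ((r : ℝ) / 2 ^ b) ^ 2) / r := by
  set m := 2 ^ (b - 1)
  have h2b : 2 ^ b = 2 * m := by rw [← pow_succ']; congr 1; omega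
  have hm : 0 < m := by positivity
  have hpm : p + 1 = 2 * m := by omega
  let f : Fin p → ℕ := fun v => r * ((v + 1) % m) / m
  have hf : ∀ v, f v ∈ range r := fun v => by
    simpa [f, Nat.div_lt_iff_lt_mul hm, Nat.mul_lt_mul_left hr] using Nat.mod_lt _ hm
  have hcollide : r * #{ab : Fin p × Fin p | f ab.1 = f ab.2} ≤ p ^ 2 + r * (r - 1) := by
    have hcount := mul_sum_sq_card_filter_le hm hr
    rw [show 2 * m - 1 = p by omega] at hcount
    rw [card_filter_apply_eq_apply_eq_sum_sq f hf]
    convert hcount using 5 with i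
    exact Fin.card_filter_val (fun v => r * ((v + 1) % m) / m = i)
  rw [measure_apply_eq_apply_eq_card_mul hxmeas hymeas hjoint f, ENNReal.toReal_mul,
    ENNReal.toReal_mul, ENNReal.toReal_inv, ENNReal.toReal_natCast, ENNReal.toReal_natCast,
    ← mul_inv, ← sq, ← div_eq_mul_inv, show (2 : ℝ) ^ b = 2 * m by exact_mod_cast h2b]
  exact div_sq_le_of_mul_le hr hrb hpm hcollide

/-- Lemma 5, eq. (18): with `b ≥ 2`, `p = 2^b - 1`, `1 ≤ r ≤ 2^(b-1)`, and `h(x)`, `h(y)`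
independent uniform on `[p]`, setting `h_z = h(z) + 1`, `j_z = h_z mod 2^(b-1)`,
`i_z = ⌊r·j_z/2^(b-1)⌋` for `z ∈ {x,y}`, we have `Pr[i_x = i_y] ≤ (1 + (r/2^b)²)/r`. -/
theorem stmt8
    {Ω : Type*} [MeasureSpace Ω] [IsProbabilityMeasure (ℙ : Measure Ω)]
    (b p r : ℕ) (hb : 2 ≤ b) (hp : p = 2 ^ b - 1) (hr : 1 ≤ r) (hrb : r ≤ 2 ^ (b - 1))
    (hx hy : Ω → Fin p) (hxmeas : Measurable hx) (hymeas : Measurable hy)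
    (hjoint : ∀ y z : Fin p,
      ℙ {ω | hx ω = y ∧ hy ω = z} = (p : ENNReal)⁻¹ * (p : ENNReal)⁻¹) :
    (ℙ {ω | r * (((hx ω : ℕ) + 1) % 2 ^ (b - 1)) / 2 ^ (b - 1)
          = r * (((hy ω : ℕ) + 1) % 2 ^ (b - 1)) / 2 ^ (b - 1)}).toReal
      ≤ (1 + ((r : ℝ) / 2 ^ b) ^ 2) / r :=
  stmt8_general b p r hb hp hr hrb hx hy hxmeas hymeas hjoint
end

section
/- Let b ≥ 2, p = 2^b − 1, and 1 ≤ r ≤ 2^{b−1}. Let h : [u] → [p] be a k-universal random hash function and define for each key x: h_x = h(x) + 1, j_x = h_x mod 2^{b−1}, i_x = ⌊r · j_x / 2^{b−1}⌋, a_x = ⌊h_x / 2^{b−1}⌋, and s_x = 2·a_x − 1 ∈ {−1,1}. Then for any j ≤ k distinct keys x₀,...,x_{j−1} ∈ [u] and any real-valued function A of (i_{x₀},...,i_{x_{j−1}}, s_{x₁},...,s_{x_{j−1}}) (i.e., A does not depend on s_{x₀}): E[s_{x₀}·A] = E[A | i_{x₀} = 0]/p. -/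
/-!
Write `q = 2^(b-1)`, so that `p = 2q - 1` and `h_x = h(x) + 1` ranges over `1, …, 2q - 1`.
The hash value `h(x) = q - 1` has bucket `0` and sign `+1`; every other value `c` pairs with
`c ± q`, which has the same `j_x = h_x mod q` (hence the same bucket) and the opposite sign.
Since `A` ignores `s_{x₀}` and `h(x₀)` is uniform and independent of the other keys' hashes,
summing over `h(x₀)` first cancels the pairs in `E[s_{x₀} A]`, leaving `E[A; h(x₀) = q - 1]`.
For the same reason `A` has the same conditional mean on every value of `h(x₀)` in bucket `0`,
so this equals `P(h(x₀) = q - 1) · E[A | i_{x₀} = 0] = E[A | i_{x₀} = 0] / p`.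
-/

open MeasureTheory ProbabilityTheory Finset

/- For a hash value `c = h(x)` and `q = 2^(b-1)`, `bucketIndex r q c` and `hashSign q c` are the
paper's `i_x` and `s_x`. -/
def bucketIndex (r q c : ℕ) : ℕ := r * ((c + 1) % q) / q

def hashSign (q c : ℕ) : ℝ := 2 * (((c + 1) / q : ℕ) : ℝ) - 1

theorem sum_range_hashSign_mul {q : ℕ} (hq : 1 ≤ q) (g : ℕ → ℝ) :
    ∑ c ∈ range (2 * q - 1), hashSign q c * g ((c + 1) % q) = g 0 := by
  obtain ⟨m, rfl⟩ : ∃ m, q = m + 1 := ⟨q - 1, by omega⟩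
  have hlow : ∀ c ∈ range m, hashSign (m + 1) c * g ((c + 1) % (m + 1)) = -g (c + 1) := by
    intro c hc
    have hc : c + 1 < m + 1 := by simpa using hc
    simp [hashSign, Nat.div_eq_of_lt hc, Nat.mod_eq_of_lt hc]
  have hhigh : ∀ c ∈ range (m + 1),
      hashSign (m + 1) (m + c) * g ((m + c + 1) % (m + 1)) = g c := by
    intro c hc
    have hc : c < m + 1 := by simpa using hc
    have hdiv : (m + c + 1) / (m + 1) = 1 := by
      rw [Nat.div_eq_iff (by omega)]; constructor <;> omega
    have hmod : (m + c + 1) % (m + 1) = c := by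
      rw [show m + c + 1 = c + (m + 1) by omega, Nat.add_mod_right, Nat.mod_eq_of_lt hc]
    simp [hashSign, hdiv, hmod]; norm_num
  rw [show 2 * (m + 1) - 1 = m + (m + 1) by omega, sum_range_add, sum_congr rfl hlow,
    sum_congr rfl hhigh, sum_range_succ', sum_neg_distrib]
  ring

theorem sum_hashSign_mul_bucketIndex {p q : ℕ} (hq : 1 ≤ q) (hp : p = 2 * q - 1) (r : ℕ)
    (ψ : ℕ → ℝ) : ∑ c : Fin p, hashSign q c * ψ (bucketIndex r q c) = ψ 0 := by
  subst hp
  simpa [bucketIndex] using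
    (Fin.sum_univ_eq_sum_range (fun c => hashSign q c * ψ (bucketIndex r q c)) _).trans
      (sum_range_hashSign_mul hq fun t => ψ (r * t / q))

theorem Fin.sum_pi_succ {κ M : Type*} [Fintype κ] [AddCommMonoid M] {n : ℕ}
    (G : (Fin (n + 1) → κ) → M) : ∑ y, G y = ∑ c, ∑ v : Fin n → κ, G (Fin.cons c v) := by
  rw [← Fintype.sum_prod_type']
  exact (Fintype.sum_equiv (Fin.consEquiv fun _ => κ) _ _ fun _ => rfl).symm

theorem integral_comp_eq_mul_sum {Ω κ : Type*} [MeasurableSpace Ω] {μ : Measure Ω}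
    [IsFiniteMeasure μ] [Fintype κ] [MeasurableSpace κ] [MeasurableSingletonClass κ]
    {Y : Ω → κ} (hY : Measurable Y) {w : ℝ} (hw : ∀ c, μ.real (Y ⁻¹' {c}) = w) (g : κ → ℝ) :
    ∫ ω, g (Y ω) ∂μ = w * ∑ c, g c := by
  rw [← integral_map hY.aemeasurable Measurable.of_discrete.aestronglyMeasurable,
    integral_fintype Integrable.of_finite, mul_sum]
  refine sum_congr rfl fun c _ => ?_
  rw [map_measureReal_apply hY (measurableSet_singleton c), hw, smul_eq_mul]

theorem sum_mul_comp_eq_sum_cons {κ β γ : Type*} [Fintype κ] {n : ℕ} (f : κ → β) (g : κ → γ)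
    (s₀ : γ) (φ : κ → ℝ) (A : (Fin (n + 1) → β) → (Fin (n + 1) → γ) → ℝ)
    (hA : ∀ iv sv sv', (∀ m, m ≠ 0 → sv m = sv' m) → A iv sv = A iv sv') :
    ∑ y : Fin (n + 1) → κ, φ (y 0) * A (fun m => f (y m)) (fun m => g (y m)) =
      ∑ v : Fin n → κ, ∑ c,
        φ c * A (Fin.cons (f c) fun m => f (v m)) (Fin.cons s₀ fun m => g (v m)) := by
  rw [Fin.sum_pi_succ, sum_comm]
  refine sum_congr rfl fun v _ => sum_congr rfl fun c _ => ?_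
  have hf : (fun m => f ((Fin.cons c v : Fin (n + 1) → κ) m)) = Fin.cons (f c) fun m => f (v m) :=
    Fin.comp_cons f c v
  have hg : (fun m => g ((Fin.cons c v : Fin (n + 1) → κ) m)) = Fin.cons (g c) fun m => g (v m) :=
    Fin.comp_cons g c v
  rw [Fin.cons_zero, hf, hg]
  congr 1
  exact hA _ _ _ fun m hm => by rw [← Fin.succ_pred m hm, Fin.cons_succ, Fin.cons_succ]

theorem integral_mul_comp_eq_sum_cons {Ω κ β γ : Type*} [MeasurableSpace Ω] {μ : Measure Ω}
    [IsFiniteMeasure μ] [Fintype κ] [MeasurableSpace κ] [MeasurableSingletonClass κ] {n : ℕ}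
    {Y : Ω → Fin (n + 1) → κ} (hY : Measurable Y) {w : ℝ} (hw : ∀ y, μ.real (Y ⁻¹' {y}) = w)
    (f : κ → β) (g : κ → γ) (s₀ : γ) (φ : κ → ℝ)
    (A : (Fin (n + 1) → β) → (Fin (n + 1) → γ) → ℝ)
    (hA : ∀ iv sv sv', (∀ m, m ≠ 0 → sv m = sv' m) → A iv sv = A iv sv') :
    ∫ ω, φ (Y ω 0) * A (fun m => f (Y ω m)) (fun m => g (Y ω m)) ∂μ =
      w * ∑ v : Fin n → κ, ∑ c,
        φ c * A (Fin.cons (f c) fun m => f (v m)) (Fin.cons s₀ fun m => g (v m)) := by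
  rw [integral_comp_eq_mul_sum hY hw fun y => φ (y 0) * A (fun m => f (y m)) (fun m => g (y m)),
    sum_mul_comp_eq_sum_cons f g s₀ φ A hA]

theorem integral_hashSign_mul_eq_setIntegral_div {Ω : Type*} [MeasurableSpace Ω]
    {μ : Measure Ω} [IsFiniteMeasure μ] {p q n : ℕ} (r : ℕ) (hq : 1 ≤ q) (hpq : p = 2 * q - 1)
    {Y : Ω → Fin (n + 1) → Fin p} (hY : Measurable Y)
    (hunif : ∀ y, μ.real (Y ⁻¹' {y}) = (p : ℝ)⁻¹ ^ (n + 1))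
    (A : (Fin (n + 1) → ℕ) → (Fin (n + 1) → ℝ) → ℝ)
    (hA : ∀ iv sv sv', (∀ m, m ≠ 0 → sv m = sv' m) → A iv sv = A iv sv') :
    ∫ ω, hashSign q (Y ω 0) *
        A (fun m => bucketIndex r q (Y ω m)) (fun m => hashSign q (Y ω m)) ∂μ =
      (∫ ω in {ω | bucketIndex r q (Y ω 0) = 0},
          A (fun m => bucketIndex r q (Y ω m)) (fun m => hashSign q (Y ω m)) ∂μ) /
        μ.real {ω | bucketIndex r q (Y ω 0) = 0} / p := by
  have key := integral_mul_comp_eq_sum_cons hY hunif (fun c : Fin p => bucketIndex r q c)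
    (fun c : Fin p => hashSign q c) (1 : ℝ)
  set E := {ω | bucketIndex r q (Y ω 0) = 0}
  have hE : MeasurableSet E := (measurable_pi_apply (0 : Fin (n + 1))).comp hY
    (.of_discrete : MeasurableSet {c : Fin p | bucketIndex r q c = 0})
  set φ : Fin p → ℝ := fun c => if bucketIndex r q c = 0 then 1 else 0
  have hindicator (ω : Ω) (f : Ω → ℝ) : E.indicator f ω = φ (Y ω 0) * f ω := by
    by_cases hω : ω ∈ E <;> simp_all [φ, E]
  set N : ℝ := ∑ c, φ c
  have hN : N ≠ 0 := by
    have hφ₀ : φ ⟨q - 1, by omega⟩ = 1 := by simp [φ, bucketIndex, Nat.sub_add_cancel hq]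
    have := single_le_sum (f := φ) (fun c _ => by positivity) (mem_univ ⟨q - 1, by omega⟩)
    linarith
  set Ψ : (Fin n → Fin p) → ℕ → ℝ := fun v t =>
    A (Fin.cons t (fun m => bucketIndex r q (v m))) (Fin.cons 1 (fun m => hashSign q (v m)))
  have hsigned : ∫ ω, hashSign q (Y ω 0) *
      A (fun m => bucketIndex r q (Y ω m)) (fun m => hashSign q (Y ω m)) ∂μ =
      (p : ℝ)⁻¹ ^ (n + 1) * ∑ v, Ψ v 0 :=
    (key _ A hA).trans
      (congrArg _ (sum_congr rfl fun v _ => sum_hashSign_mul_bucketIndex hq hpq r (Ψ v)))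
  have hrestr : ∫ ω in E, A (fun m => bucketIndex r q (Y ω m)) (fun m => hashSign q (Y ω m)) ∂μ =
      (p : ℝ)⁻¹ ^ (n + 1) * (N * ∑ v, Ψ v 0) := by
    rw [← integral_indicator hE]
    simp only [hindicator]
    rw [key φ A hA, mul_sum _ _ N]
    refine congrArg _ (sum_congr rfl fun v _ => ?_)
    rw [sum_mul]
    refine sum_congr rfl fun c _ => ?_
    by_cases hc : bucketIndex r q c = 0 <;> simp [φ, Ψ, hc]
  have hprob : μ.real E = (p : ℝ)⁻¹ ^ (n + 1) * (p ^ n * N) := by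
    rw [← integral_indicator_one hE]
    simp only [hindicator, Pi.one_apply]
    rw [key φ (fun _ _ => 1) fun _ _ _ _ => rfl]
    simp [N]
  have hp0 : (p : ℝ) ≠ 0 := by norm_cast; omega
  rw [hsigned, hrestr, hprob, inv_pow]
  field_simp
  ring

theorem stmt9_general
    {Ω : Type*} [MeasureSpace Ω] [IsProbabilityMeasure (ℙ : Measure Ω)]
    (b u p r k : ℕ) (hb : 2 ≤ b) (hp : p = 2 ^ b - 1)
    (h : Ω → Fin u → Fin p)
    (hmeas : ∀ x : Fin u, Measurable fun ω => h ω x)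
    (huniv : ∀ j : ℕ, j ≤ k → ∀ x : Fin j → Fin u, Function.Injective x →
      ∀ y : Fin j → Fin p,
        ℙ {ω | ∀ m : Fin j, h ω (x m) = y m} = (p : ENNReal)⁻¹ ^ j)
    (i : Ω → Fin u → ℕ)
    (hi : ∀ ω x, i ω x = r * (((h ω x : ℕ) + 1) % 2 ^ (b - 1)) / 2 ^ (b - 1))
    (s : Ω → Fin u → ℝ)
    (hs : ∀ ω x, s ω x = 2 * ((((h ω x : ℕ) + 1) / 2 ^ (b - 1) : ℕ) : ℝ) - 1)
    (j : ℕ) (hj : j ≤ k) (hj0 : 0 < j)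
    (x : Fin j → Fin u) (hx : Function.Injective x)
    (A : (Fin j → ℕ) → (Fin j → ℝ) → ℝ)
    (hA : ∀ (iv : Fin j → ℕ) (sv sv' : Fin j → ℝ),
      (∀ m : Fin j, m ≠ ⟨0, hj0⟩ → sv m = sv' m) → A iv sv = A iv sv') :
    ∫ ω, s ω (x ⟨0, hj0⟩) * A (fun m => i ω (x m)) (fun m => s ω (x m)) =
      ((∫ ω in {ω | i ω (x ⟨0, hj0⟩) = 0},
          A (fun m => i ω (x m)) (fun m => s ω (x m))) /
        (ℙ {ω | i ω (x ⟨0, hj0⟩) = 0}).toReal) / (p : ℝ) := by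
  obtain ⟨n, rfl⟩ : ∃ n, j = n + 1 := ⟨j - 1, by omega⟩
  set q := 2 ^ (b - 1)
  obtain rfl : i = fun ω u => bucketIndex r q (h ω u) := funext₂ hi
  obtain rfl : s = fun ω u => hashSign q (h ω u) := funext₂ hs
  have hpq : p = 2 * q - 1 := by rw [hp, ← pow_succ']; congr 2; omega
  set Y : Ω → Fin (n + 1) → Fin p := fun ω m => h ω (x m)
  have hY : Measurable Y := measurable_pi_lambda _ fun m => hmeas (x m)
  have hunif (y : Fin (n + 1) → Fin p) :
      (ℙ : Measure Ω).real (Y ⁻¹' {y}) = (p : ℝ)⁻¹ ^ (n + 1) := by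
    have hY_eq : Y ⁻¹' {y} = {ω | ∀ m, h ω (x m) = y m} := by ext; simp [Y, funext_iff]
    simp [measureReal_def, hY_eq, huniv (n + 1) hj x hx y]
  exact integral_hashSign_mul_eq_setIntegral_div r Nat.one_le_two_pow hpq hY hunif A hA

/-- Lemma 6 (sign near cancellation, arbitrary number of buckets): with `b ≥ 2`,
`p = 2^b - 1`, `1 ≤ r ≤ 2^(b-1)`, `h : [u] → [p]` a `k`-universal random hash function,
`h_x = h(x) + 1`, `j_x = h_x mod 2^(b-1)`, `i_x = ⌊r·j_x/2^(b-1)⌋`,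
`a_x = ⌊h_x/2^(b-1)⌋`, `s_x = 2a_x - 1`, for any `j ≤ k` distinct keys and any
real-valued `A` not depending on `s_{x₀}`: `E[s_{x₀}·A] = E[A | i_{x₀} = 0]/p`. -/
theorem stmt9
    {Ω : Type*} [MeasureSpace Ω] [IsProbabilityMeasure (ℙ : Measure Ω)]
    (b u p r k : ℕ) (hb : 2 ≤ b) (hp : p = 2 ^ b - 1)
    (hr : 1 ≤ r) (hrb : r ≤ 2 ^ (b - 1))
    (h : Ω → Fin u → Fin p)
    (hmeas : ∀ x : Fin u, Measurable fun ω => h ω x)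
    (huniv : ∀ j : ℕ, j ≤ k → ∀ x : Fin j → Fin u, Function.Injective x →
      ∀ y : Fin j → Fin p,
        ℙ {ω | ∀ m : Fin j, h ω (x m) = y m} = (p : ENNReal)⁻¹ ^ j)
    (i : Ω → Fin u → ℕ)
    (hi : ∀ ω x, i ω x = r * (((h ω x : ℕ) + 1) % 2 ^ (b - 1)) / 2 ^ (b - 1))
    (s : Ω → Fin u → ℝ)
    (hs : ∀ ω x, s ω x = 2 * ((((h ω x : ℕ) + 1) / 2 ^ (b - 1) : ℕ) : ℝ) - 1)
    (j : ℕ) (hj : j ≤ k) (hj0 : 0 < j)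
    (x : Fin j → Fin u) (hx : Function.Injective x)
    (A : (Fin j → ℕ) → (Fin j → ℝ) → ℝ)
    (hA : ∀ (iv : Fin j → ℕ) (sv sv' : Fin j → ℝ),
      (∀ m : Fin j, m ≠ ⟨0, hj0⟩ → sv m = sv' m) → A iv sv = A iv sv') :
    ∫ ω, s ω (x ⟨0, hj0⟩) * A (fun m => i ω (x m)) (fun m => s ω (x m)) =
      ((∫ ω in {ω | i ω (x ⟨0, hj0⟩) = 0},
          A (fun m => i ω (x m)) (fun m => s ω (x m))) /
        (ℙ {ω | i ω (x ⟨0, hj0⟩) = 0}).toReal) / (p : ℝ) :=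
  stmt9_general b u p r k hb hp h hmeas huniv i hi s hs j hj hj0 x hx A hA
end

section
/- Let q > c > 0 and n ≥ 1 be integers, and let x ≥ 0 be an integer satisfying x·c^{n−1} ≤ q^n − c^n if c divides q, and x·c^{n−1} ≤ q^{n−1}(q − c) otherwise. Define v₀ = 0, v_{i+1} = ⌊((v_i + 1)·c + x)/q⌋, and u₀ = 0, u_{i+1} = ⌊q·u_i/c⌋ + 1. Then for every 0 ≤ i ≤ n, the error E_i = ⌊x/(q − c)⌋ − v_i satisfies 0 ≤ E_i ≤ u_{n−i}. -/
/-!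
Write `T = ⌊x/(q-c)⌋`. Since `x < (T+1)(q-c)`, one step of the `v`-recursion started below `T`
stays below `T`; and since `q·w_k ≥ c·⌊q·w_k/c⌋`, a gap `T - v_i ≤ ⌊q·w_k/c⌋ + 1 = w_{k+1}`
shrinks to `T - v_{i+1} ≤ w_k`. Induction on `i`, starting from `T - v_0 = T`, thus reduces
everything to `T ≤ w_n`, i.e. `x ≤ w_n (q-c)`. This follows from `q^k ≤ w_{k+1} c^k`, and,
when `q = d c`, from the exact identity `w_{k+1} c^k (q-c) = q^{k+1} - c^{k+1}`
(there `w_k = 1 + d + ⋯ + d^{k-1}`).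
-/

section StepBounds

variable {q c x : ℕ}

theorem add_one_mul_add_div_le_div_sub (hcq : c < q) {v : ℕ} (hv : v ≤ x / (q - c)) :
    ((v + 1) * c + x) / q ≤ x / (q - c) := by
  set T := x / (q - c)
  have hx : x < (q - c) * (T + 1) := Nat.lt_mul_div_succ x (by omega)
  rw [← Nat.lt_add_one_iff, Nat.div_lt_iff_lt_mul (by omega)]
  calc (v + 1) * c + x < (T + 1) * c + (q - c) * (T + 1) := by
        have : (v + 1) * c ≤ (T + 1) * c := by gcongr
        omega
    _ = (T + 1) * q := by
        rw [mul_comm (q - c), ← mul_add, Nat.add_sub_cancel' hcq.le]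

theorem div_sub_le_add_one_mul_add_div_add (hcq : c < q) {v w : ℕ}
    (h : x / (q - c) ≤ v + (q * w / c + 1)) :
    x / (q - c) ≤ ((v + 1) * c + x) / q + w := by
  have hTx := Nat.div_mul_le_self x (q - c)
  have hDc := Nat.div_mul_le_self (q * w) c
  generalize x / (q - c) = T at *
  generalize q * w / c = D at *
  have hTc : T * c ≤ (v + 1) * c + D * c := by rw [← add_mul]; gcongr; omega
  suffices T * q ≤ (v + 1) * c + x + w * q by
    have hq : 0 < q := by omega
    have := (Nat.le_div_iff_mul_le hq).2 (Nat.sub_mul T w q ▸ Nat.sub_le_iff_le_add.2 this)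
    omega
  calc T * q = T * c + T * (q - c) := by rw [← mul_add, Nat.add_sub_cancel' hcq.le]
    _ ≤ (v + 1) * c + x + w * q := by linarith

end StepBounds

section ErrorSequence

variable {q c : ℕ} {w : ℕ → ℕ} (hw0 : w 0 = 0) (hws : ∀ i, w (i + 1) = q * w i / c + 1)
include hw0 hws

theorem pow_le_succ_mul_pow (hc : 0 < c) (k : ℕ) : q ^ k ≤ w (k + 1) * c ^ k := by
  induction k with
  | zero => simp [hws, hw0]
  | succ k ih =>
    have hstep : q * w (k + 1) < w (k + 2) * c := by
      rw [hws (k + 1), mul_comm _ c]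
      exact Nat.lt_mul_div_succ _ hc
    calc q ^ (k + 1) = q * q ^ k := pow_succ' q k
      _ ≤ q * w (k + 1) * c ^ k := by rw [mul_assoc]; gcongr
      _ ≤ w (k + 2) * c * c ^ k := by gcongr
      _ = w (k + 2) * c ^ (k + 1) := by rw [mul_assoc, ← pow_succ']

theorem mul_pow_mul_sub_add_pow_of_dvd (hc : 0 < c) (hcq : c ≤ q) (hdvd : c ∣ q) (k : ℕ) :
    w (k + 1) * c ^ k * (q - c) + c ^ (k + 1) = q ^ (k + 1) := by
  obtain ⟨d, rfl⟩ := hdvd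
  obtain ⟨e, rfl⟩ : ∃ e, d = e + 1 := ⟨d - 1, by rcases d with _ | d <;> simp_all⟩
  rw [show c * (e + 1) - c = c * e by rw [mul_add_one, Nat.add_sub_cancel]]
  induction k with
  | zero => simp [hws, hw0]; ring
  | succ k ih =>
    have hw : w (k + 2) = (e + 1) * w (k + 1) + 1 := by
      rw [hws, mul_assoc, Nat.mul_div_cancel_left _ hc]
    rw [hw, pow_succ' (c * (e + 1)), ← ih]
    ring

theorem le_mul_sub_of_mul_pow_le {x n : ℕ} (hc : 0 < c) (hcq : c < q) (hn : 1 ≤ n)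
    (hx : if c ∣ q then x * c ^ (n - 1) ≤ q ^ n - c ^ n
          else x * c ^ (n - 1) ≤ q ^ (n - 1) * (q - c)) :
    x ≤ w n * (q - c) := by
  obtain ⟨m, rfl⟩ : ∃ m, n = m + 1 := ⟨n - 1, by omega⟩
  simp only [Nat.add_sub_cancel] at hx
  refine Nat.le_of_mul_le_mul_right ?_ (pow_pos hc m)
  split_ifs at hx with hdvd
  · have := mul_pow_mul_sub_add_pow_of_dvd hw0 hws hc hcq.le hdvd m
    calc x * c ^ m ≤ q ^ (m + 1) - c ^ (m + 1) := hx
      _ = w (m + 1) * (q - c) * c ^ m := by rw [← this]; ring_nf; omega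
  · calc x * c ^ m ≤ q ^ m * (q - c) := hx
      _ ≤ w (m + 1) * c ^ m * (q - c) := by gcongr; exact pow_le_succ_mul_pow hw0 hws hc m
      _ = w (m + 1) * (q - c) * c ^ m := by ring

end ErrorSequence

/-- Error bounds in Theorem 8: with `q > c > 0`, `n ≥ 1`, `x` bounded as in the theorem,
`v₀ = 0`, `v_{i+1} = ⌊((v_i + 1)c + x)/q⌋` and `u₀ = 0`, `u_{i+1} = ⌊q·u_i/c⌋ + 1`,
the error `E_i = ⌊x/(q-c)⌋ - v_i` satisfies `0 ≤ E_i ≤ u_{n-i}` for all `0 ≤ i ≤ n`. -/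
theorem stmt12 (q c n x : ℕ) (hc : 0 < c) (hcq : c < q) (hn : 1 ≤ n)
    (hx : if c ∣ q then x * c ^ (n - 1) ≤ q ^ n - c ^ n
          else x * c ^ (n - 1) ≤ q ^ (n - 1) * (q - c))
    (v : ℕ → ℕ) (hv0 : v 0 = 0)
    (hvs : ∀ i : ℕ, v (i + 1) = ((v i + 1) * c + x) / q)
    (w : ℕ → ℕ) (hw0 : w 0 = 0)
    (hws : ∀ i : ℕ, w (i + 1) = q * w i / c + 1) :
    ∀ i ≤ n, v i ≤ x / (q - c) ∧ x / (q - c) - v i ≤ w (n - i) := by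
  have hT : x / (q - c) ≤ w n :=
    Nat.div_le_of_le_mul (by rw [mul_comm]; exact le_mul_sub_of_mul_pow_le hw0 hws hc hcq hn hx)
  suffices ∀ i ≤ n, v i ≤ x / (q - c) ∧ x / (q - c) ≤ v i + w (n - i) from
    fun i hi => (this i hi).imp_right fun h => by omega
  intro i
  induction i with
  | zero => simpa [hv0] using hT
  | succ i ih =>
    intro hi
    obtain ⟨hvT, hgap⟩ := ih (by omega)
    rw [show n - i = n - (i + 1) + 1 by omega, hws] at hgap
    rw [hvs]
    exact ⟨add_one_mul_add_div_le_div_sub hcq hvT, div_sub_le_add_one_mul_add_div_add hcq hgap⟩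
end

section
/- Let b ≥ 1, p = 2^b − 1, and let v be an integer with 0 ≤ v < 2^{2b}. Let v' = v + 1 and z = ⌊(⌊v'/2^b⌋ + v')/2^b⌋. Then z = ⌊v/p⌋ and (v + z) mod 2^b = v mod p. -/
/-!
The nested quotient collapses to a single one, `z = ⌊(v + 1)(p + 2) / (p + 1)²⌋`. Writing
`v = p q + r` with `r < p`, one has `(v + 1)(p + 2) = (p + 1)² q + ((r + 1)(p + 2) - q)`, and the
bound `v < (p + 1)²` gives `q ≤ p + 2`, so the excess lies in `[0, (p + 1)²)` and `z = q`.
Then `v + z = (p + 1) q + r` with `r < p + 1`, which gives the remainder.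
-/

theorem Nat.div_add_self_div (x m : ℕ) : (x / m + x) / m = x * (m + 1) / m ^ 2 := by
  rcases Nat.eq_zero_or_pos m with rfl | hm
  · simp
  · rw [sq, ← Nat.div_div_eq_div_mul, mul_add_one, add_comm (x * m),
      Nat.add_mul_div_right _ _ hm, add_comm]

theorem Nat.succ_div_add_succ_div_eq_div_pred {p v : ℕ} (hp : 0 < p) (hv : v < (p + 1) ^ 2) :
    ((v + 1) / (p + 1) + (v + 1)) / (p + 1) = v / p := by
  have hr : v % p < p := Nat.mod_lt v hp
  have hv_eq := (Nat.div_add_mod v p).symm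
  generalize v / p = q, v % p = r at hr hv_eq
  subst hv_eq
  have hq : q ≤ p + 2 := by
    by_contra! h
    nlinarith [Nat.mul_le_mul_left p h]
  rw [Nat.div_add_self_div]
  apply Nat.div_eq_of_lt_le <;> nlinarith

theorem Nat.add_succ_div_add_succ_div_mod {p v : ℕ} (hp : 0 < p) (hv : v < (p + 1) ^ 2) :
    (v + ((v + 1) / (p + 1) + (v + 1)) / (p + 1)) % (p + 1) = v % p := by
  have hr : v % p < p + 1 := (Nat.mod_lt v hp).trans (Nat.lt_succ_self p)
  calc (v + ((v + 1) / (p + 1) + (v + 1)) / (p + 1)) % (p + 1)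
      = ((p + 1) * (v / p) + v % p) % (p + 1) := by
        rw [Nat.succ_div_add_succ_div_eq_div_pred hp hv]
        congr 1
        linarith [Nat.div_add_mod v p]
    _ = v % p := by rw [Nat.mul_add_mod, Nat.mod_eq_of_lt hr]

/-- Algorithm 4 (branch-free division and modulus with a Mersenne prime): for `b ≥ 1`,
`p = 2^b - 1` and `0 ≤ v < 2^(2b)`, setting `v' = v + 1` and
`z = ⌊(⌊v'/2^b⌋ + v')/2^b⌋`, we have `z = ⌊v/p⌋` and `(v + z) mod 2^b = v mod p`. -/
theorem stmt15 (b v : ℕ) (hb : 1 ≤ b) (hv : v < 2 ^ (2 * b)) :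
    ((v + 1) / 2 ^ b + (v + 1)) / 2 ^ b = v / (2 ^ b - 1) ∧
    (v + ((v + 1) / 2 ^ b + (v + 1)) / 2 ^ b) % 2 ^ b = v % (2 ^ b - 1) := by
  have hp : 0 < 2 ^ b - 1 := Nat.sub_pos_of_lt (Nat.one_lt_two_pow_iff.mpr (by omega))
  have hpow : 2 ^ b = 2 ^ b - 1 + 1 := (Nat.sub_add_cancel Nat.one_le_two_pow).symm
  have hv' : v < (2 ^ b - 1 + 1) ^ 2 := by rwa [← hpow, ← pow_mul, mul_comm]
  rw [hpow, Nat.add_sub_cancel]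
  exact ⟨Nat.succ_div_add_succ_div_eq_div_pred hp hv',
    Nat.add_succ_div_add_succ_div_mod hp hv'⟩
end

section
/- Let b > ℓ ≥ 1, p = 2^b − 1, r = 2^ℓ, and let μ : [2^b] → [r] be any function such that every fiber μ^{-1}(i) has exactly 2^{b−ℓ} elements and μ(2^b − 1) = r − 1. If V and W are independent random variables, each uniformly distributed on [p] (as holds for h(x), h(y) with x ≠ y distinct keys and h a 2-universal hash function into [p]), then Pr[μ(V) = μ(W)] = (1 + (r−1)/p²)/r. -/
open MeasureTheory ProbabilityTheory Finset

/-!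
The event `μ V = μ W` is the disjoint union over the collision pairs `(y, z) ∈ [p]²`,
`μ y = μ z`, each of probability `1/p²`. Writing `s = 2^(b-ℓ)`, so that `p = r s - 1`, the
fibers of `μ` cover `[p + 1]`, and removing the point `p` from the fiber of `r - 1` leaves
fibers of sizes `s - 1, s, …, s` on `[p]`. Hence there are `(s-1)² + (r-1) s²` collision pairs,
and `r ((s-1)² + (r-1) s²) = (r s - 1)² + r - 1 = p² + r - 1`.
-/

lemma Finset.mapsTo_of_card_fiber_eq {ι κ : Type*} [DecidableEq κ] {s : Finset ι}
    {t : Finset κ} {f : ι → κ} {m : ℕ} (hfib : ∀ j ∈ t, #{i ∈ s | f i = j} = m)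
    (hcard : #s = #t * m) : Set.MapsTo f s t := by
  have hall : #{i ∈ s | f i ∈ t} = #s := by
    rw [← sum_card_fiberwise_eq_card_filter, sum_const_nat hfib, hcard]
  exact fun i hi => card_filter_eq_iff.mp hall i hi

lemma Finset.card_collisions_eq_sum_sq_card_fiber {ι κ : Type*} [DecidableEq κ]
    {s : Finset ι} {t : Finset κ} {f : ι → κ} (hf : Set.MapsTo f s t) :
    #{x ∈ s ×ˢ s | f x.1 = f x.2} = ∑ j ∈ t, #{i ∈ s | f i = j} ^ 2 := by
  rw [card_eq_sum_card_fiberwise (f := fun x => f x.1) (t := t)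
    fun x hx => hf (mem_product.mp (mem_filter.mp hx).1).1]
  refine sum_congr rfl fun j _ => ?_
  rw [sq, ← card_product, filter_filter]
  congr 1
  ext ⟨y, z⟩
  simp only [mem_filter, mem_product]
  grind

lemma Finset.card_filter_range_succ {κ : Type*} [DecidableEq κ] (f : ℕ → κ) (n : ℕ)
    (j : κ) :
    #{x ∈ range (n + 1) | f x = j} = #{x ∈ range n | f x = j} + if f n = j then 1 else 0 := by
  rw [range_add_one, filter_insert]
  split_ifs <;> simp

lemma card_collisions_range_of_card_fiber_eq {f : ℕ → ℕ} {n r s : ℕ} (hn : n + 1 = r * s)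
    (hfib : ∀ i < r, #{x ∈ range (n + 1) | f x = i} = s) (htop : f n = r - 1) :
    #{x ∈ range n ×ˢ range n | f x.1 = f x.2} = (s - 1) ^ 2 + (r - 1) * s ^ 2 := by
  obtain ⟨r, rfl⟩ : ∃ r', r = r' + 1 :=
    Nat.exists_eq_succ_of_ne_zero (by rintro rfl; simp at hn)
  have hmaps : Set.MapsTo f (range (n + 1)) (range (r + 1)) :=
    mapsTo_of_card_fiber_eq (fun i hi => hfib i (mem_range.mp hi)) (by simp [hn])
  have hfib_pred : ∀ i < r + 1, #{x ∈ range n | f x = i} = s - if i = r then 1 else 0 := by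
    intro i hi
    have := hfib i hi
    rw [card_filter_range_succ, htop] at this
    grind
  rw [card_collisions_eq_sum_sq_card_fiber (hmaps.mono_left (by simp)), sum_range_succ,
    sum_congr rfl fun i hi => by rw [hfib_pred i (by simp at hi; omega)]]
  simp only [hfib_pred r (by omega)]
  rw [sum_congr rfl fun i hi => by rw [if_neg (by simp at hi; omega)]]
  simp [add_comm]

lemma measure_preimage_finset_eq_card_mul {Ω α : Type*} [MeasurableSpace Ω]
    [MeasurableSpace α] [MeasurableSingletonClass α] {P : Measure Ω} {X : Ω → α}
    (hX : Measurable X) (A : Finset α) {c : ENNReal} (h : ∀ a ∈ A, P (X ⁻¹' {a}) = c) :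
    P (X ⁻¹' A) = #A * c := by
  rw [← sum_measure_preimage_singleton A fun a _ => hX (measurableSet_singleton a),
    sum_congr rfl h, sum_const, nsmul_eq_mul]

lemma collision_probability_formula {r s p : ℝ} (hr : r ≠ 0) (hp : p ≠ 0)
    (hrs : p + 1 = r * s) :
    ((s - 1) ^ 2 + (r - 1) * s ^ 2) * (p⁻¹ * p⁻¹) = (1 + (r - 1) / p ^ 2) / r := by
  field_simp
  linear_combination (1 - p - r * s) * hrs

theorem stmt17_general
    {Ω : Type*} [MeasureSpace Ω]
    (b ℓ p r : ℕ) (hℓb : ℓ < b) (hp : p = 2 ^ b - 1) (hr : r = 2 ^ ℓ)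
    (μsel : ℕ → ℕ)
    (hfib : ∀ i < r,
      ((Finset.range (2 ^ b)).filter fun v => μsel v = i).card = 2 ^ (b - ℓ))
    (htop : μsel (2 ^ b - 1) = r - 1)
    (V W : Ω → ℕ) (hVmeas : Measurable V) (hWmeas : Measurable W)
    (hVlt : ∀ ω, V ω < p) (hWlt : ∀ ω, W ω < p)
    (hjoint : ∀ y < p, ∀ z < p,
      ℙ {ω | V ω = y ∧ W ω = z} = (p : ENNReal)⁻¹ * (p : ENNReal)⁻¹) :
    (ℙ {ω | μsel (V ω) = μsel (W ω)}).toReal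
      = (1 + ((r : ℝ) - 1) / (p : ℝ) ^ 2) / r := by
  have hpb : p + 1 = 2 ^ b := by have := Nat.one_le_two_pow (n := b); omega
  have hrs : 2 ^ b = r * 2 ^ (b - ℓ) := by rw [hr, ← pow_add, Nat.add_sub_cancel' hℓb.le]
  have hp0 : p ≠ 0 := by have := Nat.one_lt_two_pow (n := b) (by omega); omega
  have hr0 : r ≠ 0 := hr ▸ (Nat.two_pow_pos ℓ).ne'
  have hevent : {ω | μsel (V ω) = μsel (W ω)} = (fun ω => (V ω, W ω)) ⁻¹'
      ↑{x ∈ range p ×ˢ range p | μsel x.1 = μsel x.2} := by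
    ext ω
    simp [hVlt, hWlt]
  have hpair : ∀ x ∈ {x ∈ range p ×ˢ range p | μsel x.1 = μsel x.2},
      ℙ ((fun ω => (V ω, W ω)) ⁻¹' {x}) = (p : ENNReal)⁻¹ * (p : ENNReal)⁻¹ := by
    intro x hx
    simp only [mem_filter, mem_product, mem_range] at hx
    simpa [Set.preimage, Prod.ext_iff] using hjoint x.1 hx.1.1 x.2 hx.1.2
  rw [hevent, measure_preimage_finset_eq_card_mul (hVmeas.prodMk hWmeas) _ hpair,
    card_collisions_range_of_card_fiber_eq (hpb.trans hrs) (by rwa [hpb])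
      (by rwa [← hpb] at htop)]
  simp only [ENNReal.toReal_mul, ENNReal.toReal_inv, ENNReal.toReal_natCast]
  push_cast [Nat.cast_sub Nat.one_le_two_pow, Nat.cast_sub (Nat.one_le_iff_ne_zero.mpr hr0)]
  exact collision_probability_formula (by exact_mod_cast hr0) (by exact_mod_cast hp0)
    (by exact_mod_cast hpb.trans hrs)

/-- Eq. (4): with `b > ℓ ≥ 1`, `p = 2^b - 1`, `r = 2^ℓ`, `μ : [2^b] → [r]` a
bit-selection map (all fibers of size `2^(b-ℓ)` and `μ(2^b - 1) = r - 1`), and `V`, `W`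
independent, each uniform on `[p]`: `Pr[μ(V) = μ(W)] = (1 + (r-1)/p²)/r`. -/
theorem stmt17
    {Ω : Type*} [MeasureSpace Ω] [IsProbabilityMeasure (ℙ : Measure Ω)]
    (b ℓ p r : ℕ) (hℓ1 : 1 ≤ ℓ) (hℓb : ℓ < b) (hp : p = 2 ^ b - 1) (hr : r = 2 ^ ℓ)
    (μsel : ℕ → ℕ)
    (hfib : ∀ i < r,
      ((Finset.range (2 ^ b)).filter fun v => μsel v = i).card = 2 ^ (b - ℓ))
    (htop : μsel (2 ^ b - 1) = r - 1)
    (V W : Ω → ℕ) (hVmeas : Measurable V) (hWmeas : Measurable W)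
    (hVlt : ∀ ω, V ω < p) (hWlt : ∀ ω, W ω < p)
    (hjoint : ∀ y < p, ∀ z < p,
      ℙ {ω | V ω = y ∧ W ω = z} = (p : ENNReal)⁻¹ * (p : ENNReal)⁻¹) :
    (ℙ {ω | μsel (V ω) = μsel (W ω)}).toReal
      = (1 + ((r : ℝ) - 1) / (p : ℝ) ^ 2) / r :=
  stmt17_general b ℓ p r hℓb hp hr μsel hfib htop V W hVmeas hWmeas hVlt hWlt hjoint
end

section
/- Let Q be a finite set of size q ≥ 1, let r ≥ 1, and let μ : Q → [r] be a most uniform map. Let a ∈ [r] be the unique value with r dividing q + a. If V and W are independent random variables, each uniformly distributed on Q (as holds for h(x), h(y) with x ≠ y distinct keys and h a 2-universal hash function into Q), then Pr[μ(V) = μ(W)] = (1 + a(r−a)/q²)/r ≤ (1 + (r/(2q))²)/r. -/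
/-!
Let `c i` be the size of the `i`-th fibre of `μ` and `m = (q + a) / r`. Every `c i` is `m - 1`
or `m`, so `(c i - (m - 1)) (c i - m) = 0`; summing over `i` and using `∑ c i = q` and
`r m = q + a` gives `r ∑ (c i)² = q² + a (r - a)`. The pairs `(y, z)` with `μ y = μ z` number
`∑ (c i)²`, each of probability `1 / q²`, which yields the equality; the bound is AM-GM,
`a (r - a) ≤ r² / 4`.
-/

open MeasureTheory ProbabilityTheory Finset

theorem Nat.div_add_one_eq_or_eq_of_add_eq_mul {q r a m : ℕ} (ha : a < r) (hm : q + a = r * m) :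
    q / r + 1 = m ∨ q / r = m := by
  have hr : 0 < r := Nat.zero_lt_of_lt ha
  have hle : q / r ≤ m := Nat.div_le_of_le_mul (by omega)
  have hge : m - 1 ≤ q / r := (Nat.le_div_iff_mul_le hr).2 (by rw [Nat.sub_one_mul]; lia)
  omega

theorem Nat.add_sub_one_div_eq_of_add_eq_mul {q r a m : ℕ} (ha : a < r) (hm : q + a = r * m) :
    (q + r - 1) / r = m := by
  refine Nat.div_eq_of_lt_le ?_ ?_ <;> lia

theorem Finset.sum_sq_add_card_nsmul_mul_eq {R ι : Type*} [CommRing R] (s : Finset ι)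
    {c : ι → R} {f g : R} (hc : ∀ i ∈ s, c i = f ∨ c i = g) :
    ∑ i ∈ s, c i ^ 2 + #s • (f * g) = (f + g) * ∑ i ∈ s, c i := by
  rw [← sum_const, ← sum_add_distrib, mul_sum]
  refine sum_congr rfl fun i hi => ?_
  rcases hc i hi with h | h <;> rw [h] <;> ring

theorem Finset.card_filter_comp_eq_comp_eq_sum_sq {α β : Type*} [Fintype α] [DecidableEq β]
    (f : α → β) {t : Finset β} (hf : ∀ x, f x ∈ t) :
    #{p : α × α | f p.1 = f p.2} = ∑ i ∈ t, #{x | f x = i} ^ 2 := by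
  rw [card_eq_sum_card_fiberwise (f := fun p : α × α => f p.1) fun p _ => hf p.1]
  refine sum_congr rfl fun i _ => ?_
  rw [filter_filter, sq, ← card_product, ← filter_product]
  congr 1
  ext p
  simp only [mem_filter, mem_univ, true_and, mem_product]
  constructor
  · rintro ⟨hp, rfl⟩; exact ⟨rfl, hp.symm⟩
  · rintro ⟨h1, h2⟩; exact ⟨h1.trans h2.symm, h1⟩

theorem MeasureTheory.measure_preimage_finset_of_forall_eq {Ω α : Type*} [MeasurableSpace Ω]
    [MeasurableSpace α] [MeasurableSingletonClass α] {μ : Measure Ω} {X : Ω → α}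
    (hX : Measurable X) (s : Finset α) {c : ENNReal} (h : ∀ x ∈ s, μ (X ⁻¹' {x}) = c) :
    μ (X ⁻¹' s) = #s * c := by
  rw [← sum_measure_preimage_singleton s fun y _ => hX (measurableSet_singleton y),
    sum_congr rfl h, sum_const, nsmul_eq_mul]

theorem mul_sum_sq_card_fiber_eq_of_mostUniform {α : Type*} [Fintype α] {r a : ℕ}
    (μ : α → ℕ) (hμ : ∀ x, μ x < r)
    (hfib : ∀ i < r, #{x | μ x = i} = Fintype.card α / r ∨
      #{x | μ x = i} = (Fintype.card α + r - 1) / r)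
    (ha : a < r) (hdvd : r ∣ Fintype.card α + a) :
    (r : ℝ) * ∑ i ∈ range r, (#{x | μ x = i} : ℝ) ^ 2
      = (Fintype.card α : ℝ) ^ 2 + a * (r - a) := by
  obtain ⟨m, hm⟩ := hdvd
  have hfib' : ∀ i ∈ range r, (#{x | μ x = i} : ℝ) = m - 1 ∨ (#{x | μ x = i} : ℝ) = m := by
    intro i hi
    rw [eq_sub_iff_add_eq]
    norm_cast
    rcases hfib i (mem_range.1 hi) with h | h <;> rw [h]
    · exact Nat.div_add_one_eq_or_eq_of_add_eq_mul ha hm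
    · exact Or.inr (Nat.add_sub_one_div_eq_of_add_eq_mul ha hm)
  have hsum : ∑ i ∈ range r, (#{x | μ x = i} : ℝ) = Fintype.card α := by
    rw [← Nat.cast_sum, ← card_eq_sum_card_fiberwise fun x _ => mem_range.2 (hμ x), card_univ]
  have hm' : (Fintype.card α : ℝ) + a = r * m := by exact_mod_cast hm
  have key := sum_sq_add_card_nsmul_mul_eq _ hfib'
  rw [hsum, card_range, nsmul_eq_mul] at key
  linear_combination (r : ℝ) * key + (r * m - Fintype.card α + a - r) * hm'

theorem stmt18_general
    {Ω : Type*} [MeasureSpace Ω]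
    {Q : Type*} [Fintype Q] [MeasurableSpace Q] [MeasurableSingletonClass Q]
    (q r a : ℕ) (hq : q = Fintype.card Q) (hq1 : 1 ≤ q)
    (ha : a < r) (hdvd : r ∣ q + a)
    (μmap : Q → ℕ) (hμr : ∀ x : Q, μmap x < r)
    (hfib : ∀ i < r,
      (Finset.univ.filter fun x : Q => μmap x = i).card = q / r ∨
      (Finset.univ.filter fun x : Q => μmap x = i).card = (q + r - 1) / r)
    (V W : Ω → Q) (hVmeas : Measurable V) (hWmeas : Measurable W)
    (hjoint : ∀ y z : Q,
      ℙ {ω | V ω = y ∧ W ω = z} = (q : ENNReal)⁻¹ * (q : ENNReal)⁻¹) :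
    (ℙ {ω | μmap (V ω) = μmap (W ω)}).toReal
        = (1 + (a : ℝ) * ((r : ℝ) - a) / (q : ℝ) ^ 2) / r ∧
    (1 + (a : ℝ) * ((r : ℝ) - a) / (q : ℝ) ^ 2) / r
        ≤ (1 + ((r : ℝ) / (2 * q)) ^ 2) / r := by
  classical
  subst hq
  have hq0 : (0 : ℝ) < Fintype.card Q := by exact_mod_cast hq1
  have hr0 : (0 : ℝ) < r := by exact_mod_cast Nat.zero_lt_of_lt ha
  have hprob := measure_preimage_finset_of_forall_eq (μ := ℙ) (hVmeas.prodMk hWmeas)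
    {p : Q × Q | μmap p.1 = μmap p.2} fun p _ =>
      (congrArg ℙ (Set.ext fun _ => Prod.ext_iff)).trans (hjoint p.1 p.2)
  rw [card_filter_comp_eq_comp_eq_sum_sq μmap fun x => mem_range.2 (hμr x)] at hprob
  have hsq := mul_sum_sq_card_fiber_eq_of_mostUniform μmap hμr hfib ha hdvd
  refine ⟨?_, ?_⟩
  · have hevent : {ω | μmap (V ω) = μmap (W ω)}
        = (fun ω => (V ω, W ω)) ⁻¹' ↑({p : Q × Q | μmap p.1 = μmap p.2} : Finset (Q × Q)) := by
      ext ω; simp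
    rw [hevent, hprob]
    simp only [ENNReal.toReal_mul, ENNReal.toReal_natCast, ENNReal.toReal_inv]
    push_cast
    field_simp
    linear_combination hsq
  · have hamgm := four_mul_le_sq_add (a : ℝ) (r - a)
    rw [add_sub_cancel] at hamgm
    gcongr
    rw [div_pow, mul_pow, div_le_div_iff₀ (by positivity) (by positivity)]
    nlinarith

/-- Eq. (21): let `Q` be a finite set of size `q ≥ 1`, `r ≥ 1`, `μ : Q → [r]` a most
uniform map, and `a ∈ [r]` the unique value with `r ∣ q + a`. If `V`, `W` are
independent uniform on `Q`, then
`Pr[μ(V) = μ(W)] = (1 + a(r-a)/q²)/r ≤ (1 + (r/(2q))²)/r`. -/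
theorem stmt18
    {Ω : Type*} [MeasureSpace Ω] [IsProbabilityMeasure (ℙ : Measure Ω)]
    {Q : Type*} [Fintype Q] [MeasurableSpace Q] [MeasurableSingletonClass Q]
    (q r a : ℕ) (hq : q = Fintype.card Q) (hq1 : 1 ≤ q) (hr : 1 ≤ r)
    (ha : a < r) (hdvd : r ∣ q + a)
    (μmap : Q → ℕ) (hμr : ∀ x : Q, μmap x < r)
    (hfib : ∀ i < r,
      (Finset.univ.filter fun x : Q => μmap x = i).card = q / r ∨
      (Finset.univ.filter fun x : Q => μmap x = i).card = (q + r - 1) / r)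
    (V W : Ω → Q) (hVmeas : Measurable V) (hWmeas : Measurable W)
    (hjoint : ∀ y z : Q,
      ℙ {ω | V ω = y ∧ W ω = z} = (q : ENNReal)⁻¹ * (q : ENNReal)⁻¹) :
    (ℙ {ω | μmap (V ω) = μmap (W ω)}).toReal
        = (1 + (a : ℝ) * ((r : ℝ) - a) / (q : ℝ) ^ 2) / r ∧
    (1 + (a : ℝ) * ((r : ℝ) - a) / (q : ℝ) ^ 2) / r
        ≤ (1 + ((r : ℝ) / (2 * q)) ^ 2) / r :=
  stmt18_general q r a hq hq1 ha hdvd μmap hμr hfib V W hVmeas hWmeas hjoint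
end
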